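/- arXiv:2306.07234 — 11 statements merged into one kernel-verified Lean document; each statement's English description precedes it below -/
import Mathlib

section
/- Let T : X → X be nonexpansive on an AM-space with unit and suppose s ↦ u + sη is an invariant half-line of T, i.e. T(u + sη) = u + (s+1)η for all s ≥ 0. Then for every x ∈ X the sequence (T^k(x) − kη)_{k≥0} is bounded, and in particular T^k(x)/k converges to η as k → ∞. -/
/-- If `T` is nonexpansive with an invariant half-line `s ↦ u + s•η`, then for all `x`
the sequence `T^[k] x - k•η` is bounded; in particular `T^[k] x / k → η`. -/
theorem stmt_2 {n : ℕ} (T : (Fin n → ℝ) → (Fin n → ℝ))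
    (hne : ∀ x y, ‖T x - T y‖ ≤ ‖x - y‖) (u η : Fin n → ℝ)
    (hinv : ∀ s : ℝ, 0 ≤ s → T (u + s • η) = u + (s + 1) • η) :
    ∀ x : Fin n → ℝ, (∃ C : ℝ, ∀ k : ℕ, ‖T^[k] x - (k : ℝ) • η‖ ≤ C) ∧
      Filter.Tendsto (fun k : ℕ => (k : ℝ)⁻¹ • T^[k] x) Filter.atTop (nhds η) := by
  intro x
  have key : ∀ k : ℕ, ‖T^[k] x - (u + (k : ℝ) • η)‖ ≤ ‖x - u‖ := by
    intro k
    induction k with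
    | zero => simp
    | succ k ih =>
      have h1 : T (u + (k : ℝ) • η) = u + ((k : ℝ) + 1) • η :=
        hinv k (Nat.cast_nonneg k)
      rw [Nat.cast_succ]
      calc ‖T^[k+1] x - (u + ((k : ℝ)+1) • η)‖
          = ‖T (T^[k] x) - T (u + (k : ℝ) • η)‖ := by
            rw [Function.iterate_succ_apply', h1]
        _ ≤ ‖T^[k] x - (u + (k : ℝ) • η)‖ := hne _ _
        _ ≤ ‖x - u‖ := ih
  have bnd : ∀ k : ℕ, ‖T^[k] x - (k : ℝ) • η‖ ≤ ‖x - u‖ + ‖u‖ := by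
    intro k
    have : T^[k] x - (k : ℝ) • η = (T^[k] x - (u + (k : ℝ) • η)) + u := by abel
    rw [this]
    exact (norm_add_le _ _).trans (add_le_add_left (key k) _)
  refine ⟨⟨‖x - u‖ + ‖u‖, bnd⟩, ?_⟩
  have h0 : Filter.Tendsto (fun k : ℕ => (k : ℝ)⁻¹ • T^[k] x - η) Filter.atTop (nhds 0) := by
    refine squeeze_zero_norm' (a := fun k : ℕ => (‖x - u‖ + ‖u‖) / k) ?_ ?_
    · filter_upwards [Filter.eventually_ge_atTop 1] with k hk
      have hk0 : (k : ℝ) ≠ 0 := by positivity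
      have : (k : ℝ)⁻¹ • T^[k] x - η = (k : ℝ)⁻¹ • (T^[k] x - (k : ℝ) • η) := by
        rw [smul_sub, smul_smul, inv_mul_cancel₀ hk0, one_smul]
      rw [this, norm_smul, norm_inv, Real.norm_natCast, div_eq_inv_mul]
      exact mul_le_mul_of_nonneg_left (bnd k) (by positivity)
    · exact Filter.Tendsto.div_atTop tendsto_const_nhds tendsto_natCast_atTop_atTop
  have := h0.add (tendsto_const_nhds (x := η))
  simpa using this
end

section
/- Let T : X → X be a Shapley operator on an AM-space X with unit e, and suppose s ↦ sη is a sub-invariant half-line of T, i.e. T(sη) ≥ (s+1)η for all s ≥ 0. Then for each 0 < α < 1 the unique fixed point v_α of x ↦ T((1−α)x) satisfies v_α ≥ α⁻¹η. -/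
/-- If `s ↦ s•η` is a sub-invariant half-line of a Shapley operator `T`, then the
discounted fixed point `v_α` satisfies `v_α ≥ α⁻¹ • η`. -/
theorem stmt_6 {n : ℕ} (T : (Fin n → ℝ) → (Fin n → ℝ))
    (hmono : Monotone T)
    (hcomm : ∀ (c : ℝ) (x : Fin n → ℝ),
      T (c • (1 : Fin n → ℝ) + x) = c • (1 : Fin n → ℝ) + T x)
    (η : Fin n → ℝ)
    (hsub : ∀ s : ℝ, 0 ≤ s → (s + 1) • η ≤ T (s • η))
    (α : ℝ) (hα : α ∈ Set.Ioo (0 : ℝ) 1)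
    (v : Fin n → ℝ) (hv : T ((1 - α) • v) = v) :
    α⁻¹ • η ≤ v := by
  obtain ⟨hα0, hα1⟩ := hα
  set z : Fin n → ℝ := α⁻¹ • η with hz
  have hFz : z ≤ T ((1 - α) • z) := by
    have hs : (0:ℝ) ≤ (1 - α)/α := by
      apply div_nonneg <;> linarith
    have hsub' := hsub ((1-α)/α) hs
    have h1 : (1 - α) • z = ((1-α)/α) • η := by
      rw [hz, smul_smul]
      congr 1
    have h2 : ((1-α)/α + 1) = α⁻¹ := by field_simp; ring
    rw [h1]
    calc z = ((1-α)/α + 1) • η := by rw [h2]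
      _ ≤ T (((1-α)/α) • η) := hsub'
  rcases Nat.eq_zero_or_pos n with h0 | hn
  · subst h0; intro i; exact i.elim0
  · have hne : (Finset.univ : Finset (Fin n)).Nonempty :=
      Finset.univ_nonempty_iff.mpr (Fin.pos_iff_nonempty.mp hn)
    set c := Finset.univ.sup' hne (fun i => z i - v i) with hc
    have hle : ∀ i, z i - v i ≤ c := fun i => Finset.le_sup' (fun i => z i - v i) (Finset.mem_univ i)
    have hzle : z ≤ c • (1 : Fin n → ℝ) + v := by
      intro i
      have := hle i
      simp only [Pi.add_apply, Pi.smul_apply, Pi.one_apply, smul_eq_mul, mul_one]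
      linarith
    have h3 : (1-α) • z ≤ ((1-α)*c) • (1:Fin n→ℝ) + (1-α) • v := by
      intro i
      have := hzle i
      simp only [Pi.add_apply, Pi.smul_apply, Pi.one_apply, smul_eq_mul, mul_one] at this ⊢
      nlinarith
    have key : T ((1-α) • z) ≤ ((1-α)*c) • (1:Fin n→ℝ) + v := by
      calc T ((1-α)•z) ≤ T (((1-α)*c) • (1:Fin n→ℝ) + (1-α) • v) := hmono h3
        _ = ((1-α)*c) • (1:Fin n→ℝ) + T ((1-α)•v) := hcomm _ _
        _ = ((1-α)*c) • (1:Fin n→ℝ) + v := by rw [hv]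
    have hcle : c ≤ (1-α)*c := by
      apply Finset.sup'_le hne
      intro i _
      have := (hFz.trans key) i
      simp only [Pi.add_apply, Pi.smul_apply, Pi.one_apply, smul_eq_mul, mul_one] at this
      linarith
    have hc0 : c ≤ 0 := by nlinarith
    intro i
    have := hle i
    show z i ≤ v i
    linarith
end

section
/- Let T : X → X be a Shapley operator admitting a sub-invariant half-line s ↦ u + sη. Then the sequence (T^k(x) − kη)_{k≥0} is bounded below for every x ∈ X; in particular lim inf_{k→∞} T^k(x)/k ≥ η (componentwise when X = ℝⁿ). -/
/-- Comparison principle: a Shapley operator with a sub-invariant half-line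
`s ↦ u + s•η` satisfies, for every `x`, that `T^[k] x - k•η` is bounded below,
and in particular `liminf_k T^[k] x / k ≥ η` componentwise. -/
theorem stmt_7 {n : ℕ} (T : (Fin n → ℝ) → (Fin n → ℝ))
    (hmono : Monotone T)
    (hcomm : ∀ (c : ℝ) (x : Fin n → ℝ),
      T (c • (1 : Fin n → ℝ) + x) = c • (1 : Fin n → ℝ) + T x)
    (u η : Fin n → ℝ)
    (hsub : ∀ s : ℝ, 0 ≤ s → u + (s + 1) • η ≤ T (u + s • η)) :
    ∀ x : Fin n → ℝ,
      (∃ c : ℝ, ∀ k : ℕ, c • (1 : Fin n → ℝ) ≤ T^[k] x - (k : ℝ) • η) ∧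
      (∀ i : Fin n,
        η i ≤ Filter.liminf (fun k : ℕ => T^[k] x i / (k : ℝ)) Filter.atTop) := by
  intro x
  -- translation commutes with iterates
  have hcommit : ∀ (k : ℕ) (c : ℝ) (y : Fin n → ℝ),
      T^[k] (c • (1 : Fin n → ℝ) + y) = c • (1 : Fin n → ℝ) + T^[k] y := by
    intro k
    induction k with
    | zero => intro c y; simp
    | succ k ih =>
      intro c y
      rw [Function.iterate_succ_apply', Function.iterate_succ_apply', ih, hcomm]
  -- lower bound on iterates of u
  have hlow : ∀ k : ℕ, u + (k : ℝ) • η ≤ T^[k] u := by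
    intro k
    induction k with
    | zero => simp
    | succ k ih =>
      rw [Function.iterate_succ_apply']
      have h1 : u + ((k : ℝ) + 1) • η ≤ T (T^[k] u) :=
        le_trans (hsub k (by positivity)) (hmono ih)
      have h2 : ((k + 1 : ℕ) : ℝ) = (k : ℝ) + 1 := by push_cast; ring
      rw [h2]; exact h1
  -- upper bound on iterates of u
  set M : ℝ := ∑ j, |T u j - u j| with hM
  have hM0 : 0 ≤ M := Finset.sum_nonneg fun j _ => abs_nonneg _
  have hTu : T u ≤ u + M • (1 : Fin n → ℝ) := by
    intro j
    have h1 : |T u j - u j| ≤ M :=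
      Finset.single_le_sum (f := fun j => |T u j - u j|)
        (fun j _ => abs_nonneg _) (Finset.mem_univ j)
    have := (abs_le.mp h1).2
    simp only [Pi.add_apply, Pi.smul_apply, Pi.one_apply, smul_eq_mul, mul_one]
    linarith
  have hhigh : ∀ k : ℕ, T^[k] u ≤ u + ((k : ℝ) * M) • (1 : Fin n → ℝ) := by
    intro k
    induction k with
    | zero => simp
    | succ k ih =>
      rw [Function.iterate_succ_apply']
      intro j
      have h1 : T (T^[k] u) j ≤ (((k : ℝ) * M) • (1 : Fin n → ℝ) + T u) j := by
        calc T (T^[k] u) j ≤ T (u + ((k : ℝ) * M) • (1 : Fin n → ℝ)) j := hmono ih j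
          _ = (((k : ℝ) * M) • (1 : Fin n → ℝ) + T u) j := by
              rw [add_comm u, hcomm]
      have h2 := hTu j
      simp only [Pi.add_apply, Pi.smul_apply, Pi.one_apply, smul_eq_mul, mul_one] at h1 h2 ⊢
      push_cast
      nlinarith
  -- sandwich x between translates of u
  set b : ℝ := ∑ j, |x j - u j| with hb
  have habs : ∀ j, |x j - u j| ≤ b := fun j =>
    Finset.single_le_sum (f := fun j => |x j - u j|)
      (fun j _ => abs_nonneg _) (Finset.mem_univ j)
  have hxl : (-b) • (1 : Fin n → ℝ) + u ≤ x := by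
    intro j
    have := (abs_le.mp (habs j)).1
    simp only [Pi.add_apply, Pi.smul_apply, Pi.one_apply, smul_eq_mul, mul_one]
    linarith
  have hxu : x ≤ b • (1 : Fin n → ℝ) + u := by
    intro j
    have := (abs_le.mp (habs j)).2
    simp only [Pi.add_apply, Pi.smul_apply, Pi.one_apply, smul_eq_mul, mul_one]
    linarith
  -- main lower bound
  have key : ∀ k : ℕ, (-b) • (1 : Fin n → ℝ) + (u + (k : ℝ) • η) ≤ T^[k] x := by
    intro k
    calc (-b) • (1 : Fin n → ℝ) + (u + (k : ℝ) • η)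
        ≤ (-b) • (1 : Fin n → ℝ) + T^[k] u := by
          intro j
          have h := hlow k j
          simp only [Pi.add_apply, Pi.smul_apply, Pi.one_apply, smul_eq_mul,
            mul_one] at h ⊢
          linarith
      _ = T^[k] ((-b) • (1 : Fin n → ℝ) + u) := (hcommit k _ u).symm
      _ ≤ T^[k] x := hmono.iterate k hxl
  -- main upper bound
  have keyu : ∀ k : ℕ, T^[k] x ≤ b • (1 : Fin n → ℝ) + (u + ((k : ℝ) * M) • (1 : Fin n → ℝ)) := by
    intro k
    calc T^[k] x ≤ T^[k] (b • (1 : Fin n → ℝ) + u) := hmono.iterate k hxu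
      _ = b • (1 : Fin n → ℝ) + T^[k] u := hcommit k _ u
      _ ≤ _ := by
          intro j
          have h := hhigh k j
          simp only [Pi.add_apply, Pi.smul_apply, Pi.one_apply, smul_eq_mul,
            mul_one] at h ⊢
          linarith
  set c : ℝ := -b - ∑ j, |u j| with hc
  have hcu : ∀ j, c ≤ -b + u j := by
    intro j
    have h1 : |u j| ≤ ∑ j, |u j| :=
      Finset.single_le_sum (f := fun j => |u j|) (fun j _ => abs_nonneg _) (Finset.mem_univ j)
    have := (abs_le.mp h1).1
    simp only [hc]; linarith
  have hckey : ∀ (k : ℕ) (j : Fin n), c + (k : ℝ) * η j ≤ T^[k] x j := by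
    intro k j
    have := key k j
    simp only [Pi.add_apply, Pi.smul_apply, Pi.one_apply, smul_eq_mul, mul_one] at this
    linarith [hcu j]
  constructor
  · refine ⟨c, fun k j => ?_⟩
    have := hckey k j
    simp only [Pi.sub_apply, Pi.smul_apply, Pi.one_apply, smul_eq_mul, mul_one]
    linarith
  · intro i
    -- lower comparison sequence
    have htend : Filter.Tendsto (fun k : ℕ => η i + c / (k : ℝ)) Filter.atTop (nhds (η i)) := by
      have : Filter.Tendsto (fun k : ℕ => c / (k : ℝ)) Filter.atTop (nhds 0) :=
        tendsto_const_nhds.div_atTop tendsto_natCast_atTop_atTop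
      simpa using tendsto_const_nhds.add this
    have hle : ∀ᶠ k : ℕ in Filter.atTop, (η i + c / (k : ℝ)) ≤ T^[k] x i / (k : ℝ) := by
      filter_upwards [Filter.eventually_ge_atTop 1] with k hk
      have hk0 : (0 : ℝ) < (k : ℝ) := by exact_mod_cast hk
      have heq : η i + c / (k : ℝ) = ((k : ℝ) * η i + c) / (k : ℝ) := by
        field_simp
      rw [heq]
      gcongr
      have := hckey k i; linarith
    have hub : ∀ᶠ k : ℕ in Filter.atTop,
        T^[k] x i / (k : ℝ) ≤ |b + u i| + M := by
      filter_upwards [Filter.eventually_ge_atTop 1] with k hk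
      have hk0 : (0 : ℝ) < (k : ℝ) := by exact_mod_cast hk
      have hk1 : (1 : ℝ) ≤ (k : ℝ) := by exact_mod_cast hk
      have h1 := keyu k i
      simp only [Pi.add_apply, Pi.smul_apply, Pi.one_apply, smul_eq_mul, mul_one] at h1
      have h2 : T^[k] x i / (k : ℝ) ≤ (b + u i + (k : ℝ) * M) / (k : ℝ) := by
        gcongr
        linarith
      refine h2.trans ?_
      rw [div_le_iff₀ hk0]
      have habsle : b + u i ≤ |b + u i| := le_abs_self _
      have h3 : |b + u i| ≤ |b + u i| * k := le_mul_of_one_le_right (abs_nonneg _) hk1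
      nlinarith [abs_nonneg (b + u i)]
    calc η i = Filter.liminf (fun k : ℕ => η i + c / (k : ℝ)) Filter.atTop :=
          (htend.liminf_eq).symm
      _ ≤ Filter.liminf (fun k : ℕ => T^[k] x i / (k : ℝ)) Filter.atTop :=
          Filter.liminf_le_liminf hle htend.isBoundedUnder_ge
            (Filter.isCoboundedUnder_ge_of_eventually_le _ hub)
end

section
/- Let T : X → X be a Shapley operator on an AM-space with unit that admits both a sub-invariant half-line with director vector η and a super-invariant half-line with the same director vector η. Then v_α − α⁻¹η remains bounded as α → 0⁺ and T^k(0) − kη remains bounded as k → ∞; in particular lim_{α→0⁺} α v_α = η and lim_{k→∞} k⁻¹ T^k(0) = η. -/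
private lemma le_add_norm {n : ℕ} (x y : Fin n → ℝ) :
    x ≤ y + ‖x - y‖ • (1 : Fin n → ℝ) := by
  intro i
  have h := norm_le_pi_norm (x - y) i
  simp only [Pi.sub_apply, Real.norm_eq_abs] at h
  have h2 := le_abs_self (x i - y i)
  simp only [Pi.add_apply, Pi.smul_apply, Pi.one_apply, smul_eq_mul, mul_one]
  linarith

private lemma fix_le {n : ℕ} (T : (Fin n → ℝ) → (Fin n → ℝ))
    (hmono : Monotone T)
    (hcomm : ∀ (c : ℝ) (x : Fin n → ℝ),
      T (c • (1 : Fin n → ℝ) + x) = c • (1 : Fin n → ℝ) + T x)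
    {α : ℝ} (hα0 : 0 < α) (hα1 : α < 1)
    {v w : Fin n → ℝ} (hv : T ((1 - α) • v) = v) (hw : T ((1 - α) • w) ≤ w) :
    v ≤ w := by
  have key : ∀ k : ℕ, v ≤ w + ((1 - α) ^ k * ‖v - w‖) • (1 : Fin n → ℝ) := by
    intro k
    induction k with
    | zero => simpa using le_add_norm v w
    | succ k ih =>
      set c : ℝ := (1 - α) ^ k * ‖v - w‖ with hc
      have h1 : (1 - α) • v ≤ (1 - α) • (w + c • (1 : Fin n → ℝ)) :=
        smul_le_smul_of_nonneg_left ih (by linarith)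
      have h2 : (1 - α) • (w + c • (1 : Fin n → ℝ))
          = ((1 - α) * c) • (1 : Fin n → ℝ) + (1 - α) • w := by
        rw [smul_add, smul_smul]; ring_nf
      calc v = T ((1 - α) • v) := hv.symm
        _ ≤ T (((1 - α) * c) • (1 : Fin n → ℝ) + (1 - α) • w) := by
            rw [← h2]; exact hmono h1
        _ = ((1 - α) * c) • (1 : Fin n → ℝ) + T ((1 - α) • w) := hcomm _ _
        _ ≤ ((1 - α) * c) • (1 : Fin n → ℝ) + w := by
            exact add_le_add_right hw _
        _ = w + ((1 - α) ^ (k + 1) * ‖v - w‖) • (1 : Fin n → ℝ) := by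
            rw [hc]; ring_nf
  intro i
  have hlim : Filter.Tendsto (fun k : ℕ => w i + (1 - α) ^ k * ‖v - w‖)
      Filter.atTop (nhds (w i + 0 * ‖v - w‖)) := by
    apply Filter.Tendsto.add tendsto_const_nhds
    exact (tendsto_pow_atTop_nhds_zero_of_abs_lt_one
      (by rw [abs_lt]; constructor <;> linarith)).mul_const _
  rw [zero_mul, add_zero] at hlim
  refine ge_of_tendsto' hlim (fun k => ?_)
  have := key k i
  simpa using this

private lemma fix_ge {n : ℕ} (T : (Fin n → ℝ) → (Fin n → ℝ))
    (hmono : Monotone T)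
    (hcomm : ∀ (c : ℝ) (x : Fin n → ℝ),
      T (c • (1 : Fin n → ℝ) + x) = c • (1 : Fin n → ℝ) + T x)
    {α : ℝ} (hα0 : 0 < α) (hα1 : α < 1)
    {v w : Fin n → ℝ} (hv : T ((1 - α) • v) = v) (hw : w ≤ T ((1 - α) • w)) :
    w ≤ v := by
  have key : ∀ k : ℕ, w ≤ v + ((1 - α) ^ k * ‖w - v‖) • (1 : Fin n → ℝ) := by
    intro k
    induction k with
    | zero => simpa using le_add_norm w v
    | succ k ih =>
      set c : ℝ := (1 - α) ^ k * ‖w - v‖ with hc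
      have h1 : (1 - α) • w ≤ (1 - α) • (v + c • (1 : Fin n → ℝ)) :=
        smul_le_smul_of_nonneg_left ih (by linarith)
      have h2 : (1 - α) • (v + c • (1 : Fin n → ℝ))
          = ((1 - α) * c) • (1 : Fin n → ℝ) + (1 - α) • v := by
        rw [smul_add, smul_smul]; ring_nf
      calc w ≤ T ((1 - α) • w) := hw
        _ ≤ T (((1 - α) * c) • (1 : Fin n → ℝ) + (1 - α) • v) := by
            rw [← h2]; exact hmono h1
        _ = ((1 - α) * c) • (1 : Fin n → ℝ) + T ((1 - α) • v) := hcomm _ _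
        _ = v + ((1 - α) ^ (k + 1) * ‖w - v‖) • (1 : Fin n → ℝ) := by
            rw [hv, hc]; ring_nf
  intro i
  have hlim : Filter.Tendsto (fun k : ℕ => v i + (1 - α) ^ k * ‖w - v‖)
      Filter.atTop (nhds (v i + 0 * ‖w - v‖)) := by
    apply Filter.Tendsto.add tendsto_const_nhds
    exact (tendsto_pow_atTop_nhds_zero_of_abs_lt_one
      (by rw [abs_lt]; constructor <;> linarith)).mul_const _
  rw [zero_mul, add_zero] at hlim
  refine ge_of_tendsto' hlim (fun k => ?_)
  have := key k i
  simpa using this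

/-- If a Shapley operator has both a sub-invariant and a super-invariant half-line with
the same director vector `η`, then `v_α - α⁻¹•η` stays bounded as `α → 0⁺` and
`T^[k] 0 - k•η` stays bounded; in particular `α v_α → η` and `k⁻¹ T^[k] 0 → η`. -/
theorem stmt_8 {n : ℕ} (T : (Fin n → ℝ) → (Fin n → ℝ))
    (hmono : Monotone T)
    (hcomm : ∀ (c : ℝ) (x : Fin n → ℝ),
      T (c • (1 : Fin n → ℝ) + x) = c • (1 : Fin n → ℝ) + T x)
    (u u' η : Fin n → ℝ)
    (hsub : ∀ s : ℝ, 0 ≤ s → u + (s + 1) • η ≤ T (u + s • η))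
    (hsuper : ∀ s : ℝ, 0 ≤ s → T (u' + s • η) ≤ u' + (s + 1) • η)
    (v : ℝ → Fin n → ℝ)
    (hv : ∀ α ∈ Set.Ioo (0 : ℝ) 1, T ((1 - α) • v α) = v α) :
    (∃ C : ℝ, ∀ α ∈ Set.Ioo (0 : ℝ) 1, ‖v α - α⁻¹ • η‖ ≤ C) ∧
    (∃ C : ℝ, ∀ k : ℕ, ‖T^[k] 0 - (k : ℝ) • η‖ ≤ C) ∧
    Filter.Tendsto (fun α : ℝ => α • v α) (nhdsWithin 0 (Set.Ioo (0 : ℝ) 1)) (nhds η) ∧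
    Filter.Tendsto (fun k : ℕ => (k : ℝ)⁻¹ • T^[k] 0) Filter.atTop (nhds η) := by
  set C : ℝ := 2 * (‖u‖ + ‖u'‖) with hC
  have hC0 : 0 ≤ C := by positivity
  -- Part A : the discounted bound
  have partA : ∀ α ∈ Set.Ioo (0 : ℝ) 1, ‖v α - α⁻¹ • η‖ ≤ C := by
    rintro α ⟨hα0, hα1⟩
    have hαne : α ≠ 0 := ne_of_gt hα0
    set s : ℝ := (1 - α) / α with hs
    have hs0 : 0 ≤ s := div_nonneg (by linarith) hα0.le
    have hs1 : s + 1 = α⁻¹ := by rw [hs, div_add_one hαne, sub_add_cancel, one_div]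
    -- upper bound
    have hwU : T ((1 - α) • (u' + α⁻¹ • η + ‖u'‖ • (1 : Fin n → ℝ)))
        ≤ u' + α⁻¹ • η + ‖u'‖ • (1 : Fin n → ℝ) := by
      have hle : (1 - α) • (u' + α⁻¹ • η + ‖u'‖ • (1 : Fin n → ℝ))
          ≤ ‖u'‖ • (1 : Fin n → ℝ) + (u' + s • η) := by
        intro i
        have hb : -‖u'‖ ≤ u' i := by
          have := norm_le_pi_norm u' i
          rw [Real.norm_eq_abs, abs_le] at this
          exact this.1
        simp only [Pi.smul_apply, Pi.add_apply, Pi.one_apply, smul_eq_mul, mul_one]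
        have hsη : (1 - α) * (α⁻¹ * η i) = s * η i := by
          rw [hs, div_eq_mul_inv]; ring
        have key : 0 ≤ α * (u' i + ‖u'‖) := mul_nonneg hα0.le (by linarith)
        nlinarith [key, hsη]
      calc T ((1 - α) • (u' + α⁻¹ • η + ‖u'‖ • (1 : Fin n → ℝ)))
          ≤ T (‖u'‖ • (1 : Fin n → ℝ) + (u' + s • η)) := hmono hle
        _ = ‖u'‖ • (1 : Fin n → ℝ) + T (u' + s • η) := hcomm _ _
        _ ≤ ‖u'‖ • (1 : Fin n → ℝ) + (u' + (s + 1) • η) := add_le_add_right (hsuper s hs0) _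
        _ = u' + α⁻¹ • η + ‖u'‖ • (1 : Fin n → ℝ) := by rw [hs1]; abel
    -- lower bound
    have hwL : u + α⁻¹ • η + (-‖u‖) • (1 : Fin n → ℝ)
        ≤ T ((1 - α) • (u + α⁻¹ • η + (-‖u‖) • (1 : Fin n → ℝ))) := by
      have hle : (-‖u‖) • (1 : Fin n → ℝ) + (u + s • η)
          ≤ (1 - α) • (u + α⁻¹ • η + (-‖u‖) • (1 : Fin n → ℝ)) := by
        intro i
        have hb : u i ≤ ‖u‖ := by
          have := norm_le_pi_norm u i
          rw [Real.norm_eq_abs, abs_le] at this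
          exact this.2
        simp only [Pi.smul_apply, Pi.add_apply, Pi.one_apply, smul_eq_mul, mul_one]
        have hsη : (1 - α) * (α⁻¹ * η i) = s * η i := by
          rw [hs, div_eq_mul_inv]; ring
        have key : 0 ≤ α * (‖u‖ - u i) := mul_nonneg hα0.le (by linarith)
        nlinarith [key, hsη]
      calc u + α⁻¹ • η + (-‖u‖) • (1 : Fin n → ℝ)
          = (-‖u‖) • (1 : Fin n → ℝ) + (u + (s + 1) • η) := by rw [hs1]; abel
        _ ≤ (-‖u‖) • (1 : Fin n → ℝ) + T (u + s • η) := add_le_add_right (hsub s hs0) _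
        _ = T ((-‖u‖) • (1 : Fin n → ℝ) + (u + s • η)) := (hcomm _ _).symm
        _ ≤ T ((1 - α) • (u + α⁻¹ • η + (-‖u‖) • (1 : Fin n → ℝ))) := hmono hle
    have hub := fix_le T hmono hcomm hα0 hα1 (hv α ⟨hα0, hα1⟩) hwU
    have hlb := fix_ge T hmono hcomm hα0 hα1 (hv α ⟨hα0, hα1⟩) hwL
    rw [pi_norm_le_iff_of_nonneg hC0]
    intro i
    have h1 := hub i
    have h2 := hlb i
    have hbu : |u i| ≤ ‖u‖ := by simpa [Real.norm_eq_abs] using norm_le_pi_norm u i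
    have hbu' : |u' i| ≤ ‖u'‖ := by simpa [Real.norm_eq_abs] using norm_le_pi_norm u' i
    rw [abs_le] at hbu hbu'
    simp only [Pi.add_apply, Pi.smul_apply, Pi.one_apply, smul_eq_mul, mul_one,
      Pi.neg_apply] at h1 h2
    rw [Real.norm_eq_abs, abs_le]
    constructor <;> simp only [Pi.sub_apply, Pi.smul_apply, smul_eq_mul] <;>
      [linarith [h2, hbu.1]; linarith [h1, hbu'.2]]
  -- Part B : the iterate bound
  have hiterL : ∀ k : ℕ, u + (k : ℝ) • η ≤ T^[k] u := by
    intro k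
    induction k with
    | zero => simp
    | succ k ih =>
      rw [Function.iterate_succ_apply']
      have : u + ((k : ℝ) + 1) • η ≤ T (T^[k] u) :=
        le_trans (hsub k (Nat.cast_nonneg k)) (hmono ih)
      convert this using 2
      push_cast; ring
  have hiterU : ∀ k : ℕ, T^[k] u' ≤ u' + (k : ℝ) • η := by
    intro k
    induction k with
    | zero => simp
    | succ k ih =>
      rw [Function.iterate_succ_apply']
      have : T (T^[k] u') ≤ u' + ((k : ℝ) + 1) • η :=
        le_trans (hmono ih) (hsuper k (Nat.cast_nonneg k))
      convert this using 2
      push_cast; ring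
  have hiter_shift : ∀ (k : ℕ) (c : ℝ) (x : Fin n → ℝ),
      T^[k] (c • (1 : Fin n → ℝ) + x) = c • (1 : Fin n → ℝ) + T^[k] x := by
    intro k
    induction k with
    | zero => intro c x; simp
    | succ k ih =>
      intro c x
      rw [Function.iterate_succ_apply, hcomm, ih, Function.iterate_succ_apply]
  have partB : ∀ k : ℕ, ‖T^[k] 0 - (k : ℝ) • η‖ ≤ C := by
    intro k
    have hlow : (-‖u‖) • (1 : Fin n → ℝ) + T^[k] u ≤ T^[k] 0 := by
      rw [← hiter_shift]
      apply (hmono.iterate k)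
      intro i
      have hb : u i ≤ ‖u‖ := by
        have := norm_le_pi_norm u i
        rw [Real.norm_eq_abs, abs_le] at this
        exact this.2
      simp only [Pi.add_apply, Pi.smul_apply, Pi.one_apply, smul_eq_mul, mul_one,
        Pi.zero_apply]
      linarith
    have hhigh : T^[k] 0 ≤ ‖u'‖ • (1 : Fin n → ℝ) + T^[k] u' := by
      rw [← hiter_shift]
      apply (hmono.iterate k)
      intro i
      have hb : -‖u'‖ ≤ u' i := by
        have := norm_le_pi_norm u' i
        rw [Real.norm_eq_abs, abs_le] at this
        exact this.1
      simp only [Pi.add_apply, Pi.smul_apply, Pi.one_apply, smul_eq_mul, mul_one,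
        Pi.zero_apply]
      linarith
    rw [pi_norm_le_iff_of_nonneg hC0]
    intro i
    have h1 := le_trans hhigh (add_le_add_right (hiterU k) _) i
    have h2 := le_trans (add_le_add_right (hiterL k) _) hlow i
    have hbu : |u i| ≤ ‖u‖ := by simpa [Real.norm_eq_abs] using norm_le_pi_norm u i
    have hbu' : |u' i| ≤ ‖u'‖ := by simpa [Real.norm_eq_abs] using norm_le_pi_norm u' i
    rw [abs_le] at hbu hbu'
    simp only [Pi.add_apply, Pi.smul_apply, Pi.one_apply, smul_eq_mul, mul_one,
      Pi.neg_apply] at h1 h2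
    rw [Real.norm_eq_abs, abs_le]
    constructor <;> simp only [Pi.sub_apply, Pi.smul_apply, smul_eq_mul] <;>
      [linarith [h2, hbu.1]; linarith [h1, hbu'.2]]
  -- Part C : tendsto α • v α
  have partC : Filter.Tendsto (fun α : ℝ => α • v α)
      (nhdsWithin 0 (Set.Ioo (0 : ℝ) 1)) (nhds η) := by
    rw [tendsto_iff_norm_sub_tendsto_zero]
    apply squeeze_zero' (Filter.Eventually.of_forall (fun α => norm_nonneg _))
      (g := fun α => C * |α|)
    · filter_upwards [self_mem_nhdsWithin] with α hα
      obtain ⟨hα0, hα1⟩ := hα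
      have hαne : α ≠ 0 := ne_of_gt hα0
      have : α • v α - η = α • (v α - α⁻¹ • η) := by
        rw [smul_sub, smul_smul, mul_inv_cancel₀ hαne, one_smul]
      rw [this, norm_smul, Real.norm_eq_abs, mul_comm]
      exact mul_le_mul_of_nonneg_right (partA α ⟨hα0, hα1⟩) (abs_nonneg α)
    · have : Filter.Tendsto (fun α : ℝ => C * |α|) (nhds 0) (nhds (C * |0|)) :=
        (continuous_const.mul (continuous_abs)).tendsto 0
      simpa using this.mono_left nhdsWithin_le_nhds
  -- Part D : tendsto k⁻¹ • T^[k] 0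
  have partD : Filter.Tendsto (fun k : ℕ => (k : ℝ)⁻¹ • T^[k] 0)
      Filter.atTop (nhds η) := by
    rw [tendsto_iff_norm_sub_tendsto_zero]
    apply squeeze_zero' (Filter.Eventually.of_forall (fun k => norm_nonneg _))
      (g := fun k : ℕ => C / (k : ℝ))
    · filter_upwards [Filter.eventually_ge_atTop 1] with k hk
      have hkne : (k : ℝ) ≠ 0 := Nat.cast_ne_zero.mpr (by omega)
      have : (k : ℝ)⁻¹ • T^[k] 0 - η = (k : ℝ)⁻¹ • (T^[k] 0 - (k : ℝ) • η) := by
        rw [smul_sub, smul_smul, inv_mul_cancel₀ hkne, one_smul]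
      rw [this, norm_smul, Real.norm_eq_abs, abs_of_nonneg (by positivity), div_eq_inv_mul]
      exact mul_le_mul_of_nonneg_left (partB k) (by positivity)
    · exact tendsto_const_div_atTop_nhds_zero_nat C
  exact ⟨⟨C, partA⟩, ⟨C, partB⟩, partC, partD⟩
end

section
/- Let T : ℝⁿ → ℝⁿ be a concave Shapley operator (Bellman operator) with recession function T̂(y) = inf_{s>0} s⁻¹(T(x+sy) − T(x)). Then s ↦ u + sη is a sub-invariant half-line of T (i.e. T(u + sη) ≥ u + (s+1)η for all s ≥ 0) if and only if T(u) ≥ u + η and T̂(η) ≥ η. -/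
/-- Characterization of sub-invariant half-lines of a Bellman operator:
`s ↦ u + s•η` is sub-invariant iff `T u ≥ u + η` and `T̂ η ≥ η`. -/
theorem stmt_10 {n : ℕ} (T : (Fin n → ℝ) → (Fin n → ℝ))
    (hmono : Monotone T)
    (hcomm : ∀ (c : ℝ) (x : Fin n → ℝ),
      T (c • (1 : Fin n → ℝ) + x) = c • (1 : Fin n → ℝ) + T x)
    (hconc : ∀ i : Fin n, ConcaveOn ℝ Set.univ (fun x => T x i))
    (That : (Fin n → ℝ) → (Fin n → ℝ))
    (hThat : ∀ (y x : Fin n → ℝ) (i : Fin n),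
      That y i = ⨅ s : Set.Ioi (0 : ℝ), (s : ℝ)⁻¹ * (T (x + (s : ℝ) • y) i - T x i))
    (u η : Fin n → ℝ) :
    (∀ s : ℝ, 0 ≤ s → u + (s + 1) • η ≤ T (u + s • η)) ↔
      (u + η ≤ T u ∧ η ≤ That η) := by
  -- Lipschitz-type lower bound from monotonicity and additive homogeneity
  have lip : ∀ (s : ℝ), 0 ≤ s → ∀ i : Fin n,
      T u i - s * ‖η‖ ≤ T (u + s • η) i := by
    intro s hs i
    have hx : (-(s * ‖η‖)) • (1 : Fin n → ℝ) + u ≤ u + s • η := by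
      intro j
      have hj : |η j| ≤ ‖η‖ := by
        simpa [Real.norm_eq_abs] using norm_le_pi_norm η j
      have := (abs_le.1 hj).1
      simp only [Pi.add_apply, Pi.smul_apply, Pi.one_apply, smul_eq_mul, mul_one]
      nlinarith
    have := hmono hx i
    rw [hcomm] at this
    simp only [Pi.add_apply, Pi.smul_apply, Pi.one_apply, smul_eq_mul, mul_one] at this
    linarith
  constructor
  · intro h
    have h0 : u + η ≤ T u := by
      have := h 0 le_rfl
      simpa using this
    refine ⟨h0, ?_⟩
    intro i
    rw [hThat η u i]
    apply le_ciInf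
    rintro ⟨s, hs⟩
    simp only [Set.mem_Ioi] at hs
    -- show η i ≤ s⁻¹ * (T (u + s•η) i - T u i)
    set A := T u i with hA
    set c := A - (u i + η i) with hc
    have hc0 : 0 ≤ c := by
      have := h0 i
      simp only [Pi.add_apply] at this
      simp [hc]; linarith
    apply le_of_forall_pos_le_add
    intro ε hε
    set t := max s (c / ε) + 1 with htdef
    have hst : s ≤ t := by rw [htdef]; linarith [le_max_left s (c / ε)]
    have ht : 0 < t := lt_of_lt_of_le hs hst
    have hct : c / t < ε := by
      rw [div_lt_iff₀ ht]
      have h1 : c / ε < t := by rw [htdef]; linarith [le_max_right s (c / ε)]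
      calc c = (c / ε) * ε := by field_simp
        _ < t * ε := by exact mul_lt_mul_of_pos_right h1 hε
        _ = ε * t := by ring
    -- concavity: difference quotient is nonincreasing
    set B := T (u + t • η) i with hB
    set C := T (u + s • η) i with hC
    have key : t⁻¹ * (B - A) ≤ s⁻¹ * (C - A) := by
      have ha : (0:ℝ) ≤ 1 - s / t := by
        have : s / t ≤ 1 := (div_le_one ht).2 hst
        linarith
      have hb' : (0:ℝ) ≤ s / t := div_nonneg hs.le ht.le
      have hab : (1 - s / t) + s / t = 1 := by ring
      have hcon := (hconc i).2 (Set.mem_univ u) (Set.mem_univ (u + t • η)) ha hb' hab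
      have hcomb : (1 - s / t) • u + (s / t) • (u + t • η) = u + s • η := by
        ext j
        simp only [Pi.add_apply, Pi.smul_apply, smul_eq_mul]
        field_simp
        ring
      rw [hcomb] at hcon
      simp only [smul_eq_mul] at hcon
      -- hcon : (1 - s/t) * A + (s/t) * B ≤ C
      have h1 : (s / t) * (B - A) ≤ C - A := by nlinarith [hcon]
      have h2 : t⁻¹ * (B - A) = s⁻¹ * ((s / t) * (B - A)) := by
        field_simp
      rw [h2]
      exact mul_le_mul_of_nonneg_left h1 (inv_nonneg.2 hs.le)
    have hb2 : η i - c / t ≤ t⁻¹ * (B - A) := by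
      have hB' : u i + (t + 1) * η i ≤ B := by
        have := h t ht.le i
        simpa [Pi.add_apply, Pi.smul_apply, smul_eq_mul] using this
      have h3 : t * (η i - c / t) ≤ B - A := by
        have : t * (η i - c / t) = t * η i - c := by field_simp
        rw [this]; simp only [hc]; linarith
      have := mul_le_mul_of_nonneg_left h3 (inv_nonneg.2 ht.le)
      rwa [inv_mul_cancel_left₀ ht.ne'] at this
    linarith
  · rintro ⟨h1, h2⟩ s hs
    rcases eq_or_lt_of_le hs with rfl | hs'
    · simpa using h1
    · intro i
      have hbdd : BddBelow (Set.range fun s : Set.Ioi (0:ℝ) =>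
          (s : ℝ)⁻¹ * (T (u + (s : ℝ) • η) i - T u i)) := by
        refine ⟨-‖η‖, ?_⟩
        rintro x ⟨⟨r, hr⟩, rfl⟩
        simp only [Set.mem_Ioi] at hr
        have := lip r hr.le i
        have h4 : -(r * ‖η‖) ≤ T (u + r • η) i - T u i := by linarith
        have := mul_le_mul_of_nonneg_left h4 (inv_nonneg.2 hr.le)
        have heq : r⁻¹ * -(r * ‖η‖) = -‖η‖ := by field_simp
        rw [heq] at this
        exact this
      have h5 : η i ≤ s⁻¹ * (T (u + s • η) i - T u i) := by
        have := h2 i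
        rw [hThat η u i] at this
        exact le_trans this (ciInf_le hbdd ⟨s, hs'⟩)
      have h6 : s * η i ≤ T (u + s • η) i - T u i := by
        have := mul_le_mul_of_nonneg_left h5 hs
        rwa [mul_inv_cancel_left₀ hs'.ne'] at this
      have h7 := h1 i
      simp only [Pi.add_apply, Pi.smul_apply, smul_eq_mul] at h7 ⊢
      linarith
end

section
/- Let T : ℝⁿ → ℝⁿ be a Bellman operator given coordinatewise by T_i(x) = inf_{a∈A_i}(r_i^a + P_i^a x), where each P_i^a is a row-stochastic linear functional. Suppose T(u) ≥ u + η, T̂(η) ≥ η, and for each i the infimum in the complementarity condition inf_{a∈A_i} max(P_i^a η − η_i, r_i^a + P_i^a u − u_i − η_i) ≤ 0 is attained. Then s ↦ u + sη is an invariant half-line of T: T(u + sη) = u + (s+1)η for all s ≥ 0. -/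
/-- If a Bellman operator given by `T_i x = inf_a (r_i^a + P_i^a x)` satisfies
`T u ≥ u + η`, `T̂ η ≥ η` and the complementarity condition is attained for each `i`,
then `s ↦ u + s•η` is an invariant half-line. -/
theorem stmt_11 {n : ℕ} (A : Fin n → Type*) [∀ i, Nonempty (A i)]
    (r : ∀ i, A i → ℝ) (P : ∀ i, A i → (Fin n → ℝ) →ₗ[ℝ] ℝ)
    (hP1 : ∀ i (a : A i), P i a (1 : Fin n → ℝ) = 1)
    (hPpos : ∀ i (a : A i) (x : Fin n → ℝ), 0 ≤ x → 0 ≤ P i a x)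
    (T : (Fin n → ℝ) → (Fin n → ℝ))
    (hT : ∀ (x : Fin n → ℝ) (i : Fin n), T x i = ⨅ a : A i, (r i a + P i a x))
    (hbdd : ∀ (i : Fin n) (x : Fin n → ℝ),
      BddBelow (Set.range fun a : A i => r i a + P i a x))
    (u η : Fin n → ℝ)
    (h1 : u + η ≤ T u)
    (h2 : ∀ i : Fin n, η i ≤ ⨅ a : A i, P i a η)
    (hcompl : ∀ i : Fin n, ∃ a : A i, P i a η ≤ η i ∧ r i a + P i a u ≤ u i + η i) :
    ∀ s : ℝ, 0 ≤ s → T (u + s • η) = u + (s + 1) • η := by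
  intro s hs
  funext i
  have bddη : BddBelow (Set.range fun a : A i => P i a η) := by
    refine ⟨-(∑ j, |η j|), ?_⟩
    rintro _ ⟨a, rfl⟩
    have h0 : (0:ℝ) ≤ P i a (η + (∑ j, |η j|) • (1 : Fin n → ℝ)) := by
      apply hPpos
      intro j
      have hle : |η j| ≤ ∑ k, |η k| :=
        Finset.single_le_sum (f := fun k => |η k|) (fun k _ => abs_nonneg _) (Finset.mem_univ j)
      have hneg := neg_abs_le (η j)
      simp only [Pi.add_apply, Pi.smul_apply, Pi.one_apply, Pi.zero_apply, smul_eq_mul,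
        mul_one]
      linarith
    rw [map_add, map_smul, hP1] at h0
    simp only [smul_eq_mul, mul_one] at h0
    linarith
  have key2 : ∀ a : A i, η i ≤ P i a η := fun a =>
    le_trans (h2 i) (ciInf_le bddη a)
  have key1 : ∀ a : A i, u i + η i ≤ r i a + P i a u := fun a =>
    le_trans (h1 i) (by rw [hT]; exact ciInf_le (hbdd i u) a)
  obtain ⟨a0, ha1, ha2⟩ := hcompl i
  rw [hT]
  apply le_antisymm
  · refine ciInf_le_of_le (hbdd i _) a0 ?_
    rw [map_add, map_smul]
    have hsm : s * P i a0 η ≤ s * η i := mul_le_mul_of_nonneg_left ha1 hs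
    simp only [Pi.add_apply, Pi.smul_apply, smul_eq_mul]
    nlinarith
  · refine le_ciInf fun a => ?_
    rw [map_add, map_smul]
    have h22 := key2 a
    have h11 := key1 a
    simp only [Pi.add_apply, Pi.smul_apply, smul_eq_mul]
    nlinarith
end

section
/- Let T : ℝⁿ → ℝⁿ be a Shapley operator (order preserving, commuting with addition of the unit, hence nonexpansive in the sup-norm) whose coordinate maps are concave. If η is a limit of α_k v_{α_k} for some sequence α_k → 0⁺, where v_α is the unique fixed point of x ↦ T((1−α)x), then T̂(η) = η, where T̂(y) = lim_{s→∞} s⁻¹ T(sy) is the recession function. -/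
/-- Any limit `η` of `α_k v_{α_k}` along a sequence `α_k → 0⁺` is a fixed point of the
recession function of a concave Shapley operator. -/
theorem stmt_12 {n : ℕ} (T : (Fin n → ℝ) → (Fin n → ℝ))
    (hmono : Monotone T)
    (hcomm : ∀ (c : ℝ) (x : Fin n → ℝ),
      T (c • (1 : Fin n → ℝ) + x) = c • (1 : Fin n → ℝ) + T x)
    (hconc : ∀ i : Fin n, ConcaveOn ℝ Set.univ (fun x => T x i))
    (That : (Fin n → ℝ) → (Fin n → ℝ))
    (hThat : ∀ y : Fin n → ℝ,
      Filter.Tendsto (fun s : ℝ => s⁻¹ • T (s • y)) Filter.atTop (nhds (That y)))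
    (α : ℕ → ℝ) (hα : ∀ k, α k ∈ Set.Ioo (0 : ℝ) 1)
    (hα0 : Filter.Tendsto α Filter.atTop (nhds 0))
    (v : ℕ → Fin n → ℝ) (hv : ∀ k, T ((1 - α k) • v k) = v k)
    (η : Fin n → ℝ)
    (hlim : Filter.Tendsto (fun k => α k • v k) Filter.atTop (nhds η)) :
    That η = η := by
  -- T is nonexpansive in the sup norm
  have hle : ∀ x y : Fin n → ℝ, ∀ i, T x i ≤ ‖x - y‖ + T y i := by
    intro x y i
    have hxy : x ≤ ‖x - y‖ • (1 : Fin n → ℝ) + y := by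
      intro j
      have h1 : x j - y j ≤ ‖(x - y) j‖ := le_trans (le_abs_self _) (le_refl _)
      have h2 : ‖(x - y) j‖ ≤ ‖x - y‖ := norm_le_pi_norm (x - y) j
      have := le_trans h1 h2
      simp only [Pi.add_apply, Pi.smul_apply, Pi.one_apply, smul_eq_mul, mul_one]
      linarith [this, show (x - y) j = x j - y j from rfl]
    have := hmono hxy
    have h3 := this i
    rw [hcomm] at h3
    simpa using h3
  have hnonexp : ∀ x y : Fin n → ℝ, ‖T x - T y‖ ≤ ‖x - y‖ := by
    intro x y
    rw [pi_norm_le_iff_of_nonneg (norm_nonneg _)]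
    intro i
    rw [Real.norm_eq_abs, abs_le]
    constructor
    · have := hle y x i
      rw [norm_sub_rev] at this
      simp only [Pi.sub_apply]
      linarith
    · have := hle x y i
      simp only [Pi.sub_apply]
      linarith
  -- α k ⁻¹ → ∞
  have hαpos : ∀ k, 0 < α k := fun k => (hα k).1
  have hs : Filter.Tendsto (fun k => (α k)⁻¹) Filter.atTop Filter.atTop := by
    apply Filter.Tendsto.inv_tendsto_nhdsGT_zero
    apply tendsto_nhdsWithin_of_tendsto_nhds_of_eventually_within _ hα0
    exact Filter.Eventually.of_forall fun k => hαpos k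
  -- b k := α k • T ((α k)⁻¹ • η) tends to That η
  have hb : Filter.Tendsto (fun k => α k • T ((α k)⁻¹ • η)) Filter.atTop (nhds (That η)) := by
    have := (hThat η).comp hs
    simp only [Function.comp_def, inv_inv] at this
    exact this
  -- fixed point identity rewritten
  have key : ∀ k, α k • v k = α k • T ((α k)⁻¹ • ((1 - α k) • (α k • v k))) := by
    intro k
    have h1 : (α k)⁻¹ • ((1 - α k) • (α k • v k)) = (1 - α k) • v k := by
      rw [smul_smul, smul_smul]
      congr 1
      have hne : α k ≠ 0 := ne_of_gt (hαpos k)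
      field_simp
    rw [h1, hv k]
  -- the perturbed argument tends to η
  have harg : Filter.Tendsto (fun k => (1 - α k) • (α k • v k)) Filter.atTop (nhds η) := by
    have h1 : Filter.Tendsto (fun k => (1 : ℝ) - α k) Filter.atTop (nhds 1) := by
      have := (tendsto_const_nhds (x := (1:ℝ)) (f := Filter.atTop (α := ℕ))).sub hα0
      simpa using this
    have := h1.smul hlim
    simpa using this
  -- difference between a k and b k goes to 0
  have hdiff : Filter.Tendsto (fun k => α k • v k - α k • T ((α k)⁻¹ • η))
      Filter.atTop (nhds 0) := by
    rw [tendsto_zero_iff_norm_tendsto_zero]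
    have hbound : ∀ k, ‖α k • v k - α k • T ((α k)⁻¹ • η)‖
        ≤ ‖(1 - α k) • (α k • v k) - η‖ := by
      intro k
      conv_lhs => rw [key k]
      rw [← smul_sub, norm_smul, Real.norm_eq_abs, abs_of_pos (hαpos k)]
      have h2 := hnonexp ((α k)⁻¹ • ((1 - α k) • (α k • v k))) ((α k)⁻¹ • η)
      have h3 : (α k)⁻¹ • ((1 - α k) • (α k • v k)) - (α k)⁻¹ • η
          = (α k)⁻¹ • ((1 - α k) • (α k • v k) - η) := by rw [smul_sub]
      rw [h3, norm_smul, Real.norm_eq_abs, abs_of_pos (inv_pos.mpr (hαpos k))] at h2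
      calc α k * ‖T ((α k)⁻¹ • ((1 - α k) • (α k • v k))) - T ((α k)⁻¹ • η)‖
          ≤ α k * ((α k)⁻¹ * ‖(1 - α k) • (α k • v k) - η‖) := by
            exact mul_le_mul_of_nonneg_left h2 (le_of_lt (hαpos k))
        _ = ‖(1 - α k) • (α k • v k) - η‖ := by
            rw [← mul_assoc, mul_inv_cancel₀ (ne_of_gt (hαpos k)), one_mul]
    have h0 : Filter.Tendsto (fun k => ‖(1 - α k) • (α k • v k) - η‖)
        Filter.atTop (nhds 0) := by
      rw [← tendsto_zero_iff_norm_tendsto_zero]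
      have := harg.sub (tendsto_const_nhds (x := η) (f := Filter.atTop (α := ℕ)))
      simpa using this
    exact squeeze_zero (fun k => norm_nonneg _) hbound h0
  -- hence b k → η as well
  have hb2 : Filter.Tendsto (fun k => α k • T ((α k)⁻¹ • η)) Filter.atTop (nhds η) := by
    have := hlim.sub hdiff
    simpa using this
  exact tendsto_nhds_unique hb hb2
end

section
/- Let T : ℝⁿ → ℝⁿ be a Shapley operator with concave coordinates. If η is a limit of T^{n_k}(0)/n_k for some sequence n_k → ∞, then T̂(η) = η, where T̂ is the recession function of T. -/
/-- A monotone additively homogeneous map is nonexpansive in sup norm. -/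
lemma shapley_nonexp {n : ℕ} (T : (Fin n → ℝ) → (Fin n → ℝ))
    (hmono : Monotone T)
    (hcomm : ∀ (c : ℝ) (x : Fin n → ℝ),
      T (c • (1 : Fin n → ℝ) + x) = c • (1 : Fin n → ℝ) + T x)
    (x y : Fin n → ℝ) : ‖T x - T y‖ ≤ ‖x - y‖ := by
  have key : ∀ a b : Fin n → ℝ, ∀ i, T a i - T b i ≤ ‖a - b‖ := by
    intro a b i
    have hle : a ≤ ‖a - b‖ • (1 : Fin n → ℝ) + b := by
      intro j
      have h1 : ‖(a - b) j‖ ≤ ‖a - b‖ := norm_le_pi_norm (a - b) j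
      simp only [Pi.add_apply, Pi.smul_apply, Pi.one_apply, smul_eq_mul, mul_one]
      have := (abs_le.mp (by simpa [Real.norm_eq_abs] using h1)).2
      simpa [Pi.sub_apply] using (sub_le_iff_le_add.mp this)
    have := hmono hle i
    rw [hcomm] at this
    simpa [Pi.add_apply, Pi.smul_apply, Pi.one_apply, sub_le_iff_le_add] using this
  rw [pi_norm_le_iff_of_nonneg (norm_nonneg _)]
  intro i
  rw [Real.norm_eq_abs, abs_le]
  constructor
  · have := key y x i
    have h2 : ‖y - x‖ = ‖x - y‖ := norm_sub_rev y x
    simp only [Pi.sub_apply]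
    linarith [this, h2.le, h2.ge]
  · have := key x y i
    simpa [Pi.sub_apply] using this

/-- Any limit `η` of `T^[n_k] 0 / n_k` along a sequence `n_k → ∞` is a fixed point of the
recession function of a concave Shapley operator. -/
theorem stmt_13 {n : ℕ} (T : (Fin n → ℝ) → (Fin n → ℝ))
    (hmono : Monotone T)
    (hcomm : ∀ (c : ℝ) (x : Fin n → ℝ),
      T (c • (1 : Fin n → ℝ) + x) = c • (1 : Fin n → ℝ) + T x)
    (hconc : ∀ i : Fin n, ConcaveOn ℝ Set.univ (fun x => T x i))
    (That : (Fin n → ℝ) → (Fin n → ℝ))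
    (hThat : ∀ y : Fin n → ℝ,
      Filter.Tendsto (fun s : ℝ => s⁻¹ • T (s • y)) Filter.atTop (nhds (That y)))
    (m : ℕ → ℕ) (hm : Filter.Tendsto m Filter.atTop Filter.atTop)
    (η : Fin n → ℝ)
    (hlim : Filter.Tendsto (fun k => ((m k : ℝ))⁻¹ • T^[m k] 0) Filter.atTop (nhds η)) :
    That η = η := by
  have lip := shapley_nonexp T hmono hcomm
  -- ‖T^[k+1] 0 - T^[k] 0‖ ≤ ‖T 0‖
  have hstep : ∀ k : ℕ, ‖T^[k + 1] (0 : Fin n → ℝ) - T^[k] 0‖ ≤ ‖T 0‖ := by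
    intro k
    induction k with
    | zero => simp
    | succ k ih =>
      calc ‖T^[k + 1 + 1] (0 : Fin n → ℝ) - T^[k + 1] 0‖
          = ‖T (T^[k + 1] 0) - T (T^[k] 0)‖ := by
            rw [Function.iterate_succ_apply' T (k + 1), Function.iterate_succ_apply' T k]
        _ ≤ ‖T^[k + 1] (0 : Fin n → ℝ) - T^[k] 0‖ := lip _ _
        _ ≤ ‖T 0‖ := ih
  have hmr : Filter.Tendsto (fun k => (m k : ℝ)) Filter.atTop Filter.atTop :=
    Filter.Tendsto.comp tendsto_natCast_atTop_atTop hm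
  -- along the sequence, s⁻¹ T(sη) → That η
  have h1 : Filter.Tendsto (fun k => ((m k : ℝ))⁻¹ • T ((m k : ℝ) • η))
      Filter.atTop (nhds (That η)) := (hThat η).comp hmr
  -- also → η
  have hinv : Filter.Tendsto (fun k => ((m k : ℝ))⁻¹) Filter.atTop (nhds 0) :=
    hmr.inv_tendsto_atTop
  have hnorm0 : Filter.Tendsto (fun k => ‖((m k : ℝ))⁻¹ • T^[m k] 0 - η‖)
      Filter.atTop (nhds 0) := by
    have := hlim.sub (tendsto_const_nhds :
      Filter.Tendsto (fun _ : ℕ => η) Filter.atTop (nhds η))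
    simpa using this.norm
  have hb : Filter.Tendsto
      (fun k => 2 * ‖((m k : ℝ))⁻¹ • T^[m k] 0 - η‖ + ((m k : ℝ))⁻¹ * ‖T 0‖)
      Filter.atTop (nhds 0) := by
    have h2 := (hnorm0.const_mul 2).add (hinv.mul_const ‖T 0‖)
    simpa using h2
  have hbound : ∀ᶠ k in Filter.atTop,
      ‖((m k : ℝ))⁻¹ • T ((m k : ℝ) • η) - η‖ ≤
        2 * ‖((m k : ℝ))⁻¹ • T^[m k] 0 - η‖ + ((m k : ℝ))⁻¹ * ‖T 0‖ := by
    filter_upwards [hm.eventually_ge_atTop 1] with k hk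
    have hmk : (0 : ℝ) < (m k : ℝ) := by exact_mod_cast Nat.pos_of_ne_zero (by omega)
    set s : ℝ := (m k : ℝ)
    set x : Fin n → ℝ := T^[m k] 0
    have habs : ‖s⁻¹‖ = s⁻¹ := by
      rw [Real.norm_eq_abs, abs_of_pos (inv_pos.mpr hmk)]
    have hA : ‖s⁻¹ • T (s • η) - s⁻¹ • T x‖ ≤ ‖s⁻¹ • x - η‖ := by
      calc ‖s⁻¹ • T (s • η) - s⁻¹ • T x‖
          = s⁻¹ * ‖T (s • η) - T x‖ := by rw [← smul_sub, norm_smul, habs]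
        _ ≤ s⁻¹ * ‖s • η - x‖ :=
            mul_le_mul_of_nonneg_left (lip _ _) (inv_pos.mpr hmk).le
        _ = ‖s⁻¹ • (s • η - x)‖ := by rw [norm_smul, habs]
        _ = ‖s⁻¹ • x - η‖ := by
            rw [smul_sub, smul_smul, inv_mul_cancel₀ hmk.ne', one_smul, norm_sub_rev]
    have hB : ‖s⁻¹ • T x - η‖ ≤ ‖s⁻¹ • x - η‖ + s⁻¹ * ‖T 0‖ := by
      have : s⁻¹ • T x - η = (s⁻¹ • x - η) + s⁻¹ • (T x - x) := by
        rw [smul_sub]; abel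
      rw [this]
      refine (norm_add_le _ _).trans ?_
      gcongr
      have hTx : ‖T x - x‖ ≤ ‖T 0‖ := by
        have := hstep (m k)
        rwa [Function.iterate_succ_apply' T] at this
      rw [norm_smul, habs]
      exact mul_le_mul_of_nonneg_left hTx (inv_pos.mpr hmk).le
    calc ‖s⁻¹ • T (s • η) - η‖
        ≤ ‖s⁻¹ • T (s • η) - s⁻¹ • T x‖ + ‖s⁻¹ • T x - η‖ := by
          simpa using norm_sub_le_norm_sub_add_norm_sub (s⁻¹ • T (s • η)) (s⁻¹ • T x) η
      _ ≤ ‖s⁻¹ • x - η‖ + (‖s⁻¹ • x - η‖ + s⁻¹ * ‖T 0‖) := add_le_add hA hB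
      _ = 2 * ‖s⁻¹ • x - η‖ + s⁻¹ * ‖T 0‖ := by ring
  have h2 : Filter.Tendsto (fun k => ((m k : ℝ))⁻¹ • T ((m k : ℝ) • η))
      Filter.atTop (nhds η) := by
    rw [tendsto_iff_norm_sub_tendsto_zero]
    exact squeeze_zero' (Filter.Eventually.of_forall fun k => norm_nonneg _) hbound hb
  exact tendsto_nhds_unique h1 h2
end

section
/- Let T : ℝⁿ → ℝⁿ be order preserving, commuting with addition of the unit e, with concave coordinates, and suppose T^p(0) ≥ p η̃ for some integer p ≥ 1 and vector η̃ with T̂(η̃) = η̃ (recession function fixed point). Set u := sup((p−1)η̃, T(0)+(p−2)η̃, …, T^{p−2}(0)+η̃, T^{p−1}(0)). Then s ↦ u + sη̃ is a sub-invariant half-line: T(u + sη̃) ≥ u + (s+1)η̃ for all s ≥ 0. -/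
lemma key_aux {n : ℕ} (T : (Fin n → ℝ) → (Fin n → ℝ))
    (hmono : Monotone T)
    (hcomm : ∀ (c : ℝ) (x : Fin n → ℝ),
      T (c • (1 : Fin n → ℝ) + x) = c • (1 : Fin n → ℝ) + T x)
    (hconc : ∀ i : Fin n, ConcaveOn ℝ Set.univ (fun x => T x i))
    (That : (Fin n → ℝ) → (Fin n → ℝ))
    (hThat : ∀ y : Fin n → ℝ,
      Filter.Tendsto (fun s : ℝ => s⁻¹ • T (s • y)) Filter.atTop (nhds (That y)))
    (x y : Fin n → ℝ) (t : ℝ) (ht : 0 ≤ t) :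
    T x + t • That y ≤ T (x + t • y) := by
  rcases eq_or_lt_of_le ht with rfl | ht
  · simp
  intro i
  simp only [Pi.add_apply, Pi.smul_apply, smul_eq_mul]
  -- reduce to: That y i ≤ t⁻¹ * (T (x + t•y) i - T x i)
  set c : ℝ := ‖x‖ with hc
  have hxle : x ≤ c • (1 : Fin n → ℝ) := by
    intro j
    simpa using (abs_le.mp (by simpa [abs_of_nonneg] using norm_le_pi_norm x j)).2
  have hxge : (-c) • (1 : Fin n → ℝ) ≤ x := by
    intro j
    simpa using (abs_le.mp (by simpa [abs_of_nonneg] using norm_le_pi_norm x j)).1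
  have hbound : ∀ s : ℝ, T (s • y) i - c ≤ T (x + s • y) i ∧ T (x + s • y) i ≤ T (s • y) i + c := by
    intro s
    constructor
    · have := hmono (show (-c) • (1 : Fin n → ℝ) + s • y ≤ x + s • y from
        add_le_add_left hxge _)
      rw [hcomm] at this
      have := this i
      simp only [Pi.add_apply, Pi.smul_apply, Pi.one_apply, smul_eq_mul, mul_one] at this
      linarith
    · have := hmono (show x + s • y ≤ c • (1 : Fin n → ℝ) + s • y from
        add_le_add_left hxle _)
      rw [hcomm] at this
      have := this i
      simp only [Pi.add_apply, Pi.smul_apply, Pi.one_apply, smul_eq_mul, mul_one] at this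
      linarith
  -- the limit of s⁻¹ * T (s•y) i
  have hlim0 : Filter.Tendsto (fun s : ℝ => s⁻¹ * T (s • y) i) Filter.atTop (nhds (That y i)) := by
    have := tendsto_pi_nhds.1 (hThat y) i
    simpa using this
  have hczero : Filter.Tendsto (fun s : ℝ => s⁻¹ * c) Filter.atTop (nhds 0) := by
    simpa using tendsto_inv_atTop_zero.mul_const c
  have hlim1 : Filter.Tendsto (fun s : ℝ => s⁻¹ * T (x + s • y) i) Filter.atTop (nhds (That y i)) := by
    apply tendsto_of_tendsto_of_tendsto_of_le_of_le'
      (g := fun s : ℝ => s⁻¹ * T (s • y) i - s⁻¹ * c)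
      (h := fun s : ℝ => s⁻¹ * T (s • y) i + s⁻¹ * c)
    · simpa using hlim0.sub hczero
    · simpa using hlim0.add hczero
    · filter_upwards [Filter.eventually_gt_atTop (0:ℝ)] with s hs
      have h1 := (hbound s).1
      have hinv : (0:ℝ) ≤ s⁻¹ := by positivity
      nlinarith [mul_le_mul_of_nonneg_left h1 hinv]
    · filter_upwards [Filter.eventually_gt_atTop (0:ℝ)] with s hs
      have h2 := (hbound s).2
      have hinv : (0:ℝ) ≤ s⁻¹ := by positivity
      nlinarith [mul_le_mul_of_nonneg_left h2 hinv]
  have hlim2 : Filter.Tendsto (fun s : ℝ => s⁻¹ * (T (x + s • y) i - T x i))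
      Filter.atTop (nhds (That y i)) := by
    have h3 : Filter.Tendsto (fun s : ℝ => s⁻¹ * T x i) Filter.atTop (nhds 0) := by
      simpa using tendsto_inv_atTop_zero.mul_const (T x i)
    have := hlim1.sub h3
    simp only [sub_zero] at this
    convert this using 2 with s
    ring
  -- slope monotonicity from concavity
  have hslope : ∀ s : ℝ, t ≤ s → s⁻¹ * (T (x + s • y) i - T x i) ≤ t⁻¹ * (T (x + t • y) i - T x i) := by
    intro s hts
    have hs : 0 < s := lt_of_lt_of_le ht hts
    set a : ℝ := 1 - t / s with ha'
    set b : ℝ := t / s with hb'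
    have ha : 0 ≤ a := by
      have : t / s ≤ 1 := (div_le_one hs).mpr hts
      linarith
    have hb : 0 ≤ b := by positivity
    have hab : a + b = 1 := by ring
    have hcv := (hconc i).2 (Set.mem_univ x) (Set.mem_univ (x + s • y)) ha hb hab
    simp only [smul_eq_mul] at hcv
    have heq : a • x + b • (x + s • y) = x + t • y := by
      rw [smul_add, ← add_assoc, ← add_smul, hab, one_smul, smul_smul]
      congr 1
      rw [hb']
      congr 1
      field_simp
    rw [heq] at hcv
    -- hcv : a * T x i + b * T (x+s•y) i ≤ T (x+t•y) i
    have hb2 : b * (T (x + s • y) i - T x i) ≤ T (x + t • y) i - T x i := by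
      have : a * T x i = T x i - b * T x i := by rw [ha']; ring
      nlinarith [hcv]
    have hbt : b = t * s⁻¹ := by rw [hb']; field_simp
    rw [hbt] at hb2
    calc s⁻¹ * (T (x + s • y) i - T x i)
        = t⁻¹ * (t * s⁻¹ * (T (x + s • y) i - T x i)) := by
          field_simp
      _ ≤ t⁻¹ * (T (x + t • y) i - T x i) := by
          apply mul_le_mul_of_nonneg_left hb2 (by positivity)
  have hfinal : That y i ≤ t⁻¹ * (T (x + t • y) i - T x i) := by
    apply le_of_tendsto hlim2
    filter_upwards [Filter.eventually_ge_atTop t] with s hs using hslope s hs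
  have h5 := mul_le_mul_of_nonneg_left hfinal (le_of_lt ht)
  have h6 : t * (t⁻¹ * (T (x + t • y) i - T x i)) = T (x + t • y) i - T x i := by
    field_simp
  rw [h6] at h5
  linarith
/-- If `T^[p] 0 ≥ p•η̃` and `T̂ η̃ = η̃` for a concave Shapley operator `T`, then
`s ↦ u + s•η̃` with `u := sup_k (T^[k] 0 + (p-1-k)•η̃)` is a sub-invariant half-line. -/
theorem stmt_15 {n : ℕ} (T : (Fin n → ℝ) → (Fin n → ℝ))
    (hmono : Monotone T)
    (hcomm : ∀ (c : ℝ) (x : Fin n → ℝ),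
      T (c • (1 : Fin n → ℝ) + x) = c • (1 : Fin n → ℝ) + T x)
    (hconc : ∀ i : Fin n, ConcaveOn ℝ Set.univ (fun x => T x i))
    (That : (Fin n → ℝ) → (Fin n → ℝ))
    (hThat : ∀ y : Fin n → ℝ,
      Filter.Tendsto (fun s : ℝ => s⁻¹ • T (s • y)) Filter.atTop (nhds (That y)))
    (eta : Fin n → ℝ) (hfix : That eta = eta)
    (p : ℕ) (hp : 1 ≤ p)
    (hT0 : (p : ℝ) • eta ≤ T^[p] 0) :
    ∀ s : ℝ, 0 ≤ s →
      (Finset.range p).sup' (Finset.nonempty_range_iff.mpr (Nat.one_le_iff_ne_zero.mp hp))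
          (fun k => T^[k] 0 + ((p : ℝ) - 1 - (k : ℝ)) • eta) + (s + 1) • eta ≤
        T ((Finset.range p).sup'
            (Finset.nonempty_range_iff.mpr (Nat.one_le_iff_ne_zero.mp hp))
            (fun k => T^[k] 0 + ((p : ℝ) - 1 - (k : ℝ)) • eta) + s • eta) := by
  have key : ∀ (x : Fin n → ℝ) (t : ℝ), 0 ≤ t → T x + t • eta ≤ T (x + t • eta) := by
    intro x t ht
    have h := key_aux T hmono hcomm hconc That hThat x eta t ht
    rwa [hfix] at h
  intro s hs
  set u := (Finset.range p).sup' (Finset.nonempty_range_iff.mpr (Nat.one_le_iff_ne_zero.mp hp))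
      (fun k => T^[k] 0 + ((p : ℝ) - 1 - (k : ℝ)) • eta) with hu
  have hub : ∀ k ∈ Finset.range p, T^[k] 0 + ((p:ℝ)-1-(k:ℝ)) • eta ≤ u := by
    intro k hk
    rw [hu]
    exact Finset.le_sup' (fun k => T^[k] 0 + ((p:ℝ)-1-(k:ℝ)) • eta) hk
  -- u ≥ T^[p-1] 0
  have hlast : T^[p-1] 0 ≤ u := by
    have h1 := hub (p-1) (Finset.mem_range.mpr (by omega))
    have hcast : ((p-1:ℕ):ℝ) = (p:ℝ) - 1 := by
      push_cast [Nat.cast_sub hp]; ring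
    rw [hcast] at h1
    simpa using h1
  have hTpu : (p:ℝ) • eta ≤ T u := by
    calc (p:ℝ) • eta ≤ T^[p] 0 := hT0
      _ = T (T^[p-1] 0) := by
          rw [← Function.iterate_succ_apply' T (p-1) 0]
          congr 1
          omega
      _ ≤ T u := hmono hlast
  have hTu : u + eta ≤ T u := by
    rw [← le_sub_iff_add_le]
    apply Finset.sup'_le
    intro k hk
    rw [le_sub_iff_add_le]
    rcases Nat.eq_zero_or_pos k with rfl | hk0
    · have heq : T^[0] (0 : Fin n → ℝ) + ((p:ℝ)-1-((0:ℕ):ℝ)) • eta + eta = (p:ℝ) • eta := by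
        simp only [Function.iterate_zero_apply, Nat.cast_zero, sub_zero, zero_add]
        rw [sub_smul, one_smul, sub_add_cancel]
      rw [heq]
      exact hTpu
    · obtain ⟨j, rfl⟩ := Nat.exists_eq_succ_of_ne_zero hk0.ne'
      have h7 : j + 1 < p ∨ j + 1 = p := by
        have : j.succ < p := Finset.mem_range.mp hk
        omega
      have hjk : j ∈ Finset.range p := Finset.mem_range.mpr (by omega)
      have hjp : (j:ℝ) ≤ (p:ℝ) - 1 := by
        have h8 : j + 1 ≤ p := by omega
        have : (j:ℝ) + 1 ≤ (p:ℝ) := by exact_mod_cast h8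
        linarith
      have hkey := key (T^[j] 0) ((p:ℝ)-1-(j:ℝ)) (by linarith)
      have hchain : T (T^[j] 0) + ((p:ℝ)-1-(j:ℝ)) • eta ≤ T u :=
        le_trans hkey (hmono (hub j hjk))
      have heq : T^[j+1] (0 : Fin n → ℝ) + ((p:ℝ)-1-((j+1:ℕ):ℝ)) • eta + eta
          = T (T^[j] 0) + ((p:ℝ)-1-(j:ℝ)) • eta := by
        rw [Function.iterate_succ_apply']
        push_cast
        module
      rw [heq]
      exact hchain
  calc u + (s+1) • eta = (u + eta) + s • eta := by
        rw [add_smul, one_smul, add_assoc, add_comm (s • eta) eta, ← add_assoc]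
      _ ≤ T u + s • eta := add_le_add_left hTu _
      _ ≤ T (u + s • eta) := key u s hs
end

section
/- Let T : ℝⁿ → ℝⁿ be a Bellman operator (order preserving, commuting with addition of unit, concave coordinates). Then lim_{α→0⁺} α v_α and lim_{k→∞} k⁻¹ T^k(0) both exist and coincide with the supremum of director vectors η over all sub-invariant half-lines s ↦ u + sη of T. -/
open Filter Set

namespace Stmt16

variable {n : ℕ}

lemma le_norm_one (x : Fin n → ℝ) : x ≤ ‖x‖ • (1 : Fin n → ℝ) := by
  intro i
  have h := norm_le_pi_norm x i
  simp only [Real.norm_eq_abs] at h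
  simpa using (le_abs_self (x i)).trans h

lemma neg_norm_one_le (x : Fin n → ℝ) : (-‖x‖) • (1 : Fin n → ℝ) ≤ x := by
  intro i
  have h := norm_le_pi_norm x i
  simp only [Real.norm_eq_abs] at h
  have := neg_abs_le (x i)
  simp only [Pi.smul_apply, Pi.one_apply, smul_eq_mul, mul_one]
  linarith

lemma shift {T : (Fin n → ℝ) → (Fin n → ℝ)}
    (hcomm : ∀ (c : ℝ) (x : Fin n → ℝ), T (c • (1 : Fin n → ℝ) + x) = c • (1 : Fin n → ℝ) + T x)
    (c : ℝ) (x : Fin n → ℝ) : T (x + c • (1 : Fin n → ℝ)) = T x + c • (1 : Fin n → ℝ) := by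
  rw [add_comm, hcomm, add_comm]

lemma nonexp_le {T : (Fin n → ℝ) → (Fin n → ℝ)} (hmono : Monotone T)
    (hcomm : ∀ (c : ℝ) (x : Fin n → ℝ), T (c • (1 : Fin n → ℝ) + x) = c • (1 : Fin n → ℝ) + T x)
    (x y : Fin n → ℝ) : T x ≤ T y + ‖x - y‖ • (1 : Fin n → ℝ) := by
  have hxy : x ≤ y + ‖x - y‖ • (1 : Fin n → ℝ) := by
    have := le_norm_one (x - y)
    intro i
    have hi := this i
    simp only [Pi.sub_apply] at hi
    simp only [Pi.add_apply]
    linarith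
  calc T x ≤ T (y + ‖x - y‖ • (1 : Fin n → ℝ)) := hmono hxy
    _ = T y + ‖x - y‖ • (1 : Fin n → ℝ) := shift hcomm _ _

lemma lip {T : (Fin n → ℝ) → (Fin n → ℝ)} (hmono : Monotone T)
    (hcomm : ∀ (c : ℝ) (x : Fin n → ℝ), T (c • (1 : Fin n → ℝ) + x) = c • (1 : Fin n → ℝ) + T x)
    (x y : Fin n → ℝ) : ‖T x - T y‖ ≤ ‖x - y‖ := by
  rw [pi_norm_le_iff_of_nonneg (norm_nonneg _)]
  intro i
  have h1 := nonexp_le hmono hcomm x y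
  have h2 := nonexp_le hmono hcomm y x
  have h1i := h1 i
  have h2i := h2 i
  rw [show ‖y - x‖ = ‖x - y‖ from norm_sub_rev y x] at h2i
  simp only [Pi.add_apply, Pi.smul_apply, Pi.one_apply, smul_eq_mul, mul_one] at h1i h2i
  simp only [Pi.sub_apply, Real.norm_eq_abs, abs_le]
  constructor <;> linarith

lemma Tcont {T : (Fin n → ℝ) → (Fin n → ℝ)} (hmono : Monotone T)
    (hcomm : ∀ (c : ℝ) (x : Fin n → ℝ), T (c • (1 : Fin n → ℝ) + x) = c • (1 : Fin n → ℝ) + T x) :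
    Continuous T := by
  have : LipschitzWith 1 T := by
    apply LipschitzWith.of_dist_le_mul
    intro x y
    simpa [dist_eq_norm] using lip hmono hcomm x y
  exact this.continuous


lemma iterate_shift {T : (Fin n → ℝ) → (Fin n → ℝ)}
    (hcomm : ∀ (c : ℝ) (x : Fin n → ℝ), T (c • (1 : Fin n → ℝ) + x) = c • (1 : Fin n → ℝ) + T x)
    (k : ℕ) (c : ℝ) (x : Fin n → ℝ) :
    T^[k] (x + c • (1 : Fin n → ℝ)) = T^[k] x + c • (1 : Fin n → ℝ) := by
  induction k generalizing x with
  | zero => simp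
  | succ k ih =>
    rw [Function.iterate_succ_apply, Function.iterate_succ_apply, add_comm x, hcomm, add_comm]
    exact ih _

lemma zstep {T : (Fin n → ℝ) → (Fin n → ℝ)} (hmono : Monotone T)
    (hcomm : ∀ (c : ℝ) (x : Fin n → ℝ), T (c • (1 : Fin n → ℝ) + x) = c • (1 : Fin n → ℝ) + T x)
    (k : ℕ) : ‖T^[k+1] 0 - T^[k] 0‖ ≤ ‖T 0‖ := by
  induction k with
  | zero => simp
  | succ k ih =>
    rw [Function.iterate_succ_apply' T (k+1), Function.iterate_succ_apply' T k]
    rw [Function.iterate_succ_apply' T k] at ih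
    exact (lip hmono hcomm _ _).trans ih

lemma zbound {T : (Fin n → ℝ) → (Fin n → ℝ)} (hmono : Monotone T)
    (hcomm : ∀ (c : ℝ) (x : Fin n → ℝ), T (c • (1 : Fin n → ℝ) + x) = c • (1 : Fin n → ℝ) + T x)
    (k : ℕ) : ‖T^[k] 0‖ ≤ k * ‖T 0‖ := by
  induction k with
  | zero => simp
  | succ k ih =>
    have h := zstep hmono hcomm k
    have h2 : ‖T^[k+1] 0‖ ≤ ‖T^[k+1] 0 - T^[k] 0‖ + ‖T^[k] 0‖ := by
      simpa using norm_add_le (T^[k+1] 0 - T^[k] 0) (T^[k] 0)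
    calc ‖T^[k+1] 0‖ ≤ ‖T^[k+1] 0 - T^[k] 0‖ + ‖T^[k] 0‖ := h2
      _ ≤ ‖T 0‖ + k * ‖T 0‖ := add_le_add h ih
      _ = (k+1 : ℕ) * ‖T 0‖ := by push_cast; ring

lemma director_iter {T : (Fin n → ℝ) → (Fin n → ℝ)} (hmono : Monotone T)
    {u η : Fin n → ℝ} (hd : ∀ s : ℝ, 0 ≤ s → u + (s + 1) • η ≤ T (u + s • η)) (k : ℕ) :
    u + (k : ℝ) • η ≤ T^[k] u := by
  induction k with
  | zero => simp
  | succ k ih =>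
    rw [Function.iterate_succ_apply']
    push_cast
    calc u + ((k : ℝ) + 1) • η ≤ T (u + (k : ℝ) • η) := hd (k : ℝ) (by positivity)
      _ ≤ T (T^[k] u) := hmono ih

lemma director_low_y {T : (Fin n → ℝ) → (Fin n → ℝ)} (hmono : Monotone T)
    (hcomm : ∀ (c : ℝ) (x : Fin n → ℝ), T (c • (1 : Fin n → ℝ) + x) = c • (1 : Fin n → ℝ) + T x)
    {u η : Fin n → ℝ} (hd : ∀ s : ℝ, 0 ≤ s → u + (s + 1) • η ≤ T (u + s • η)) (k : ℕ) :
    (k : ℝ) • η ≤ T^[k] 0 + (2 * ‖u‖) • (1 : Fin n → ℝ) := by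
  have h1 : T^[k] (u + (-‖u‖) • (1 : Fin n → ℝ)) ≤ T^[k] 0 := by
    apply hmono.iterate k
    intro i
    have h := le_norm_one u i
    simp only [Pi.smul_apply, Pi.one_apply, smul_eq_mul, mul_one] at h
    simp only [Pi.add_apply, Pi.smul_apply, Pi.one_apply, smul_eq_mul, mul_one, Pi.zero_apply]
    linarith
  rw [iterate_shift hcomm] at h1
  have h2 := director_iter hmono hd k
  intro i
  have h1i := h1 i
  have h2i := h2 i
  have h3 := neg_norm_one_le u i
  simp only [Pi.add_apply, Pi.smul_apply, Pi.one_apply, smul_eq_mul, mul_one,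
    Pi.zero_apply] at h1i h2i h3 ⊢
  linarith


lemma wbound {T : (Fin n → ℝ) → (Fin n → ℝ)} (hmono : Monotone T)
    (hcomm : ∀ (c : ℝ) (x : Fin n → ℝ), T (c • (1 : Fin n → ℝ) + x) = c • (1 : Fin n → ℝ) + T x)
    {α : ℝ} (hα : α ∈ Set.Ioo (0:ℝ) 1) {w : Fin n → ℝ} (hw : T ((1 - α) • w) = w) :
    ‖α • w‖ ≤ ‖T 0‖ := by
  obtain ⟨h0, h1⟩ := hα
  have h2 : ‖w - T 0‖ ≤ (1 - α) * ‖w‖ := by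
    calc ‖w - T 0‖ = ‖T ((1-α) • w) - T 0‖ := by rw [hw]
      _ ≤ ‖(1-α) • w - 0‖ := lip hmono hcomm _ _
      _ = (1-α) * ‖w‖ := by rw [sub_zero, norm_smul]; simp [abs_of_nonneg (by linarith : (0:ℝ) ≤ 1 - α)]
  have h3 : ‖w‖ ≤ ‖w - T 0‖ + ‖T 0‖ := by simpa using norm_add_le (w - T 0) (T 0)
  have h4 : α * ‖w‖ ≤ ‖T 0‖ := by nlinarith [norm_nonneg w]
  rw [norm_smul, Real.norm_eq_abs, abs_of_pos h0]
  exact h4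

lemma director_low_w {T : (Fin n → ℝ) → (Fin n → ℝ)} (hmono : Monotone T)
    (hcomm : ∀ (c : ℝ) (x : Fin n → ℝ), T (c • (1 : Fin n → ℝ) + x) = c • (1 : Fin n → ℝ) + T x)
    {u η : Fin n → ℝ} (hd : ∀ s : ℝ, 0 ≤ s → u + (s + 1) • η ≤ T (u + s • η))
    {α : ℝ} (hα : α ∈ Set.Ioo (0:ℝ) 1) {vα : Fin n → ℝ} (hvα : T ((1 - α) • vα) = vα) :
    η + α • (u + (-‖u‖ - ‖η‖) • (1 : Fin n → ℝ) - η) ≤ α • vα := by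
  obtain ⟨h0, h1⟩ := hα
  set c : ℝ := -‖u‖ - ‖η‖ with hc
  set s : ℝ := (1 - α)/α with hs
  have hs0 : 0 ≤ s := div_nonneg (by linarith) h0.le
  have hαs : α * s = 1 - α := by rw [hs, ← mul_div_assoc, mul_div_cancel_left₀ _ h0.ne']
  set w : Fin n → ℝ := u + s • η + c • (1 : Fin n → ℝ) with hwdef
  -- step (i) : w ≤ T ((1-α) • w)
  have stepi : w ≤ T ((1 - α) • w) := by
    have e1 : (1 - α) • w = ((1-α) • (u + s • η)) + ((1-α) * c) • (1 : Fin n → ℝ) := by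
      rw [hwdef]; module
    have e2 : T ((1 - α) • w) = T ((1-α) • (u + s • η)) + ((1-α) * c) • (1 : Fin n → ℝ) := by
      rw [e1, shift hcomm]
    have hA : (u + ((1-α)*s) • η) + (-(α * ‖u‖)) • (1 : Fin n → ℝ) ≤ (1-α) • (u + s • η) := by
      intro i
      have hui := le_norm_one u i
      simp only [Pi.smul_apply, Pi.one_apply, smul_eq_mul, mul_one] at hui
      simp only [Pi.add_apply, Pi.smul_apply, Pi.one_apply, smul_eq_mul, mul_one]
      nlinarith
    have hB : T ((u + ((1-α)*s) • η) + (-(α * ‖u‖)) • (1 : Fin n → ℝ))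
        = T (u + ((1-α)*s) • η) + (-(α * ‖u‖)) • (1 : Fin n → ℝ) := shift hcomm _ _
    have hC := hd ((1-α)*s) (mul_nonneg (by linarith) hs0)
    -- combine
    rw [e2]
    intro i
    have hAi := hmono hA i
    rw [hB] at hAi
    have hCi := hC i
    have hηi : -‖η‖ ≤ η i := by
      have := neg_norm_one_le η i
      simpa [Pi.smul_apply] using this
    simp only [hwdef, Pi.add_apply, Pi.smul_apply, Pi.one_apply, smul_eq_mul, mul_one] at hAi hCi ⊢
    have e3 : (1 - α) * s + 1 = α + s := by linear_combination -hαs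
    rw [e3] at hCi
    have key : α * η i ≥ α * (‖u‖ + c) := by
      rw [hc]; nlinarith
    linarith [hAi, hCi, key]
  -- step (ii) : w ≤ vα
  have stepii : w ≤ vα := by
    set F : (Fin n → ℝ) → (Fin n → ℝ) := fun x => T ((1 - α) • x) with hF
    have hFmono : Monotone F := by
      intro x y hxy
      exact hmono (smul_le_smul_of_nonneg_left hxy (by linarith))
    have hFfix : F vα = vα := hvα
    have claim1 : ∀ k, w ≤ F^[k] w := by
      intro k
      induction k with
      | zero => simp
      | succ k ih =>
        rw [Function.iterate_succ_apply]
        calc w ≤ F^[k] w := ih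
          _ ≤ F^[k] (F w) := hFmono.iterate k stepi
    have claim2 : ∀ k, ‖F^[k] w - vα‖ ≤ (1-α)^k * ‖w - vα‖ := by
      intro k
      induction k with
      | zero => simp
      | succ k ih =>
        rw [Function.iterate_succ_apply']
        calc ‖F (F^[k] w) - vα‖ = ‖T ((1-α) • F^[k] w) - T ((1-α) • vα)‖ := by rw [hvα]
          _ ≤ ‖(1-α) • F^[k] w - (1-α) • vα‖ := lip hmono hcomm _ _
          _ = (1-α) * ‖F^[k] w - vα‖ := by
              rw [← smul_sub, norm_smul, Real.norm_eq_abs, abs_of_nonneg (by linarith)]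
          _ ≤ (1-α) * ((1-α)^k * ‖w - vα‖) := by
              apply mul_le_mul_of_nonneg_left ih (by linarith)
          _ = (1-α)^(k+1) * ‖w - vα‖ := by ring
    intro i
    have hlim : Filter.Tendsto (fun k : ℕ => vα i + (1-α)^k * ‖w - vα‖) Filter.atTop
        (nhds (vα i)) := by
      have hp : Filter.Tendsto (fun k : ℕ => (1-α)^k) Filter.atTop (nhds 0) :=
        tendsto_pow_atTop_nhds_zero_of_lt_one (by linarith) (by linarith)
      have := ((hp.mul_const (‖w - vα‖)).const_add (vα i))
      simpa using this
    apply ge_of_tendsto' hlim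
    intro k
    have hk1 := claim1 k i
    have hk2 : F^[k] w i - vα i ≤ (1-α)^k * ‖w - vα‖ := by
      have := norm_le_pi_norm (F^[k] w - vα) i
      simp only [Pi.sub_apply, Real.norm_eq_abs] at this
      have := (abs_le.mp (this.trans (claim2 k))).2
      linarith [claim2 k]
    linarith
  -- step (iii)
  have : α • w ≤ α • vα := smul_le_smul_of_nonneg_left stepii (le_of_lt h0)
  intro i
  have hi := this i
  simp only [hwdef, Pi.add_apply, Pi.sub_apply, Pi.smul_apply, Pi.one_apply, smul_eq_mul,
    mul_one] at hi ⊢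
  have e7 : α * (s * η i) = (1 - α) * η i := by
    calc α * (s * η i) = (α * s) * η i := by ring
      _ = (1 - α) * η i := by rw [hαs]
  linarith [hi, e7]


lemma eps_director {T : (Fin n → ℝ) → (Fin n → ℝ)}
    (hcomm : ∀ (c : ℝ) (x : Fin n → ℝ), T (c • (1 : Fin n → ℝ) + x) = c • (1 : Fin n → ℝ) + T x)
    {u η g : Fin n → ℝ} {ε : ℝ}
    (hhalf : ∀ s : ℝ, 0 ≤ s → u + s • η + g ≤ T (u + s • η))
    (hg : η - ε • (1 : Fin n → ℝ) ≤ g) :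
    ∀ s : ℝ, 0 ≤ s → u + (s + 1) • (η - ε • (1 : Fin n → ℝ))
      ≤ T (u + s • (η - ε • (1 : Fin n → ℝ))) := by
  intro s hs
  have e1 : u + s • (η - ε • (1 : Fin n → ℝ)) = (u + s • η) + (-(s * ε)) • (1 : Fin n → ℝ) := by
    module
  rw [e1, shift hcomm]
  have h2 := hhalf s hs
  intro i
  have h2i := h2 i
  have hgi := hg i
  simp only [Pi.add_apply, Pi.sub_apply, Pi.smul_apply, Pi.one_apply, smul_eq_mul, mul_one]
    at h2i hgi ⊢
  nlinarith [h2i, hgi]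

lemma conc_limit {T : (Fin n → ℝ) → (Fin n → ℝ)} (hmono : Monotone T)
    (hcomm : ∀ (c : ℝ) (x : Fin n → ℝ), T (c • (1 : Fin n → ℝ) + x) = c • (1 : Fin n → ℝ) + T x)
    (hconc : ∀ i : Fin n, ConcaveOn ℝ Set.univ (fun x => T x i))
    {a : ℕ → (Fin n → ℝ)} {b : Fin n → ℝ} {lam : ℕ → ℝ}
    (hev : ∀ᶠ r in Filter.atTop, lam r ∈ Set.Icc (0:ℝ) 1)
    {p q : Fin n → ℝ}
    (hp : Filter.Tendsto (fun r => lam r • a r + (1 - lam r) • b) Filter.atTop (nhds p))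
    (hq : Filter.Tendsto (fun r => lam r • T (a r) + (1 - lam r) • T b) Filter.atTop (nhds q)) :
    q ≤ T p := by
  intro i
  have hTp : Filter.Tendsto (fun r => T (lam r • a r + (1 - lam r) • b) i) Filter.atTop
      (nhds (T p i)) :=
    (((continuous_apply i).comp (Tcont hmono hcomm)).continuousAt.tendsto.comp hp)
  have hqi : Filter.Tendsto (fun r => (lam r • T (a r) + (1 - lam r) • T b) i) Filter.atTop
      (nhds (q i)) := ((continuous_apply i).continuousAt.tendsto.comp hq)
  refine le_of_tendsto_of_tendsto hqi hTp ?_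
  filter_upwards [hev] with r hr
  obtain ⟨hr0, hr1⟩ := hr
  have := (hconc i).2 (Set.mem_univ (a r)) (Set.mem_univ b) hr0
    (show (0:ℝ) ≤ 1 - lam r by linarith) (by ring)
  simpa using this


lemma ylim_succ {T : (Fin n → ℝ) → (Fin n → ℝ)} (hmono : Monotone T)
    (hcomm : ∀ (c : ℝ) (x : Fin n → ℝ), T (c • (1 : Fin n → ℝ) + x) = c • (1 : Fin n → ℝ) + T x)
    {φ : ℕ → ℕ} (hφn : Filter.Tendsto (fun r => (φ r : ℝ)) Filter.atTop Filter.atTop)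
    {ηa : Fin n → ℝ}
    (hlim : Filter.Tendsto (fun r => ((φ r : ℝ))⁻¹ • T^[φ r] 0) Filter.atTop (nhds ηa)) :
    Filter.Tendsto (fun r => ((φ r : ℝ))⁻¹ • T^[φ r + 1] 0) Filter.atTop (nhds ηa) := by
  have hinv : Filter.Tendsto (fun r => ((φ r : ℝ))⁻¹ * ‖T 0‖) Filter.atTop (nhds 0) := by
    simpa using hφn.inv_tendsto_atTop.mul_const ‖T 0‖
  have hd : Filter.Tendsto (fun r => ((φ r : ℝ))⁻¹ • (T^[φ r + 1] 0 - T^[φ r] 0))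
      Filter.atTop (nhds 0) := by
    apply squeeze_zero_norm _ hinv
    intro r
    rw [norm_smul, Real.norm_eq_abs, abs_of_nonneg (by positivity)]
    exact mul_le_mul_of_nonneg_left (zstep hmono hcomm (φ r)) (by positivity)
  have := hlim.add hd
  rw [add_zero] at this
  apply this.congr
  intro r
  module

lemma key_y {T : (Fin n → ℝ) → (Fin n → ℝ)} (hmono : Monotone T)
    (hcomm : ∀ (c : ℝ) (x : Fin n → ℝ), T (c • (1 : Fin n → ℝ) + x) = c • (1 : Fin n → ℝ) + T x)
    (hconc : ∀ i : Fin n, ConcaveOn ℝ Set.univ (fun x => T x i))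
    {φ : ℕ → ℕ} (hφ : Filter.Tendsto φ Filter.atTop Filter.atTop) {ηa : Fin n → ℝ}
    (hlim : Filter.Tendsto (fun r => ((φ r : ℝ))⁻¹ • T^[φ r] 0) Filter.atTop (nhds ηa))
    (k : ℕ) {s : ℝ} (hs : 0 ≤ s) :
    T^[k+1] 0 + s • ηa ≤ T (T^[k] 0 + s • ηa) := by
  have hφn : Filter.Tendsto (fun r => (φ r : ℝ)) Filter.atTop Filter.atTop :=
    tendsto_natCast_atTop_atTop.comp hφ
  set lam : ℕ → ℝ := fun r => s / (φ r : ℝ) with hlam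
  have hlam0 : Filter.Tendsto lam Filter.atTop (nhds 0) :=
    tendsto_const_nhds.div_atTop hφn
  have hev : ∀ᶠ r in Filter.atTop, lam r ∈ Set.Icc (0:ℝ) 1 := by
    filter_upwards [hφn.eventually_ge_atTop s, hφn.eventually_ge_atTop 1] with r h1 h2
    constructor
    · exact div_nonneg hs (by linarith)
    · rw [div_le_one (by linarith)]; exact h1
  have hsm : ∀ (x : Fin n → ℝ) (r : ℕ), lam r • x = s • (((φ r : ℝ))⁻¹ • x) := by
    intro x r
    rw [smul_smul, hlam]
    simp [div_eq_mul_inv]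
  have hp : Filter.Tendsto (fun r => lam r • T^[φ r] 0 + (1 - lam r) • T^[k] 0)
      Filter.atTop (nhds (T^[k] 0 + s • ηa)) := by
    have h1 : Filter.Tendsto (fun r => lam r • T^[φ r] 0) Filter.atTop (nhds (s • ηa)) := by
      have := hlim.const_smul s
      apply this.congr
      intro r
      rw [hsm]
    have h2 : Filter.Tendsto (fun r => (1 - lam r) • T^[k] 0) Filter.atTop
        (nhds (T^[k] 0)) := by
      have := (hlam0.const_sub 1).smul_const (T^[k] 0)
      simpa using this
    have := h1.add h2
    rwa [add_comm (s • ηa)] at this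
  have hq : Filter.Tendsto (fun r => lam r • T (T^[φ r] 0) + (1 - lam r) • T (T^[k] 0))
      Filter.atTop (nhds (T^[k+1] 0 + s • ηa)) := by
    have h1 : Filter.Tendsto (fun r => lam r • T (T^[φ r] 0)) Filter.atTop
        (nhds (s • ηa)) := by
      have hy := (ylim_succ hmono hcomm hφn hlim).const_smul s
      apply hy.congr
      intro r
      rw [hsm, Function.iterate_succ_apply']
    have h2 : Filter.Tendsto (fun r => (1 - lam r) • T (T^[k] 0)) Filter.atTop
        (nhds (T^[k+1] 0)) := by
      have := (hlam0.const_sub 1).smul_const (T (T^[k] 0))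
      rw [Function.iterate_succ_apply']
      simpa using this
    have := h1.add h2
    rwa [add_comm (s • ηa)] at this
  exact conc_limit hmono hcomm hconc hev hp hq


lemma avg_halfline {T : (Fin n → ℝ) → (Fin n → ℝ)} (hmono : Monotone T)
    (hcomm : ∀ (c : ℝ) (x : Fin n → ℝ), T (c • (1 : Fin n → ℝ) + x) = c • (1 : Fin n → ℝ) + T x)
    (hconc : ∀ i : Fin n, ConcaveOn ℝ Set.univ (fun x => T x i))
    {φ : ℕ → ℕ} (hφ : Filter.Tendsto φ Filter.atTop Filter.atTop) {ηa : Fin n → ℝ}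
    (hlim : Filter.Tendsto (fun r => ((φ r : ℝ))⁻¹ • T^[φ r] 0) Filter.atTop (nhds ηa))
    {m : ℕ} (hm : 1 ≤ m) {s : ℝ} (hs : 0 ≤ s) :
    ((m:ℝ)⁻¹ • ∑ k ∈ Finset.range m, T^[k] 0) + s • ηa + (m:ℝ)⁻¹ • T^[m] 0
      ≤ T (((m:ℝ)⁻¹ • ∑ k ∈ Finset.range m, T^[k] 0) + s • ηa) := by
  have hm0 : (0:ℝ) < (m:ℝ) := by exact_mod_cast hm
  set A : Fin n → ℝ := (m:ℝ)⁻¹ • ∑ k ∈ Finset.range m, T^[k] 0 with hA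
  intro i
  -- Jensen
  have hsum : ∑ _k ∈ Finset.range m, (m:ℝ)⁻¹ = 1 := by
    rw [Finset.sum_const, Finset.card_range, nsmul_eq_mul, mul_inv_cancel₀ (ne_of_gt hm0)]
  have jensen := (hconc i).le_map_sum (t := Finset.range m)
    (w := fun _ => (m:ℝ)⁻¹) (p := fun k => T^[k] 0 + s • ηa)
    (fun _ _ => by positivity) hsum (fun _ _ => Set.mem_univ _)
  have hargs : ∑ k ∈ Finset.range m, (m:ℝ)⁻¹ • (T^[k] 0 + s • ηa) = A + s • ηa := by
    rw [hA]
    simp only [smul_add]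
    rw [Finset.sum_add_distrib, Finset.sum_const, Finset.card_range, ← Finset.smul_sum]
    congr 1
    rw [← Nat.cast_smul_eq_nsmul (R := ℝ), smul_smul]
    rw [mul_inv_cancel₀ (ne_of_gt hm0), one_smul]
  rw [hargs] at jensen
  -- lower bound each term
  have hterm : ∀ k ∈ Finset.range m,
      (m:ℝ)⁻¹ * ((T^[k+1] 0 + s • ηa) i) ≤ (m:ℝ)⁻¹ * (T (T^[k] 0 + s • ηa) i) := by
    intro k _
    apply mul_le_mul_of_nonneg_left _ (by positivity)
    exact key_y hmono hcomm hconc hφ hlim k hs i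
  have hlb := Finset.sum_le_sum hterm
  have hchain : ∑ k ∈ Finset.range m, (m:ℝ)⁻¹ * ((T^[k+1] 0 + s • ηa) i)
      ≤ T (A + s • ηa) i := by
    refine hlb.trans ?_
    simpa [smul_eq_mul] using jensen
  -- compute LHS of hchain
  have htele : ∑ k ∈ Finset.range m, (T^[k+1] 0 : Fin n → ℝ) i
      = (∑ k ∈ Finset.range m, (T^[k] 0 : Fin n → ℝ) i) + (T^[m] 0 : Fin n → ℝ) i := by
    have h1 : ∑ k ∈ Finset.range (m+1), (T^[k] 0 : Fin n → ℝ) i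
        = (∑ k ∈ Finset.range m, (T^[k+1] 0 : Fin n → ℝ) i) + (T^[0] 0 : Fin n → ℝ) i :=
      Finset.sum_range_succ' _ m
    have h2 : ∑ k ∈ Finset.range (m+1), (T^[k] 0 : Fin n → ℝ) i
        = (∑ k ∈ Finset.range m, (T^[k] 0 : Fin n → ℝ) i) + (T^[m] 0 : Fin n → ℝ) i :=
      Finset.sum_range_succ _ m
    simp only [Function.iterate_zero_apply, Pi.zero_apply, add_zero] at h1
    rw [← h1, h2]
  have hAi : A i = (↑m:ℝ)⁻¹ * ∑ k ∈ Finset.range m, (T^[k] 0 : Fin n → ℝ) i := by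
    rw [hA]
    simp [Finset.sum_apply]
  have hLHS : ∑ k ∈ Finset.range m, (m:ℝ)⁻¹ * ((T^[k+1] 0 + s • ηa) i)
      = (A + s • ηa + (m:ℝ)⁻¹ • T^[m] 0) i := by
    simp only [Pi.add_apply, Pi.smul_apply, smul_eq_mul]
    have e1 : ∀ x ∈ Finset.range m, (↑m:ℝ)⁻¹ * ((T^[x+1] 0 : Fin n → ℝ) i + s * ηa i)
        = (↑m:ℝ)⁻¹ * (T^[x+1] 0 : Fin n → ℝ) i + (↑m:ℝ)⁻¹ * (s * ηa i) :=
      fun x _ => by ring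
    rw [Finset.sum_congr rfl e1, Finset.sum_add_distrib, ← Finset.mul_sum, htele,
      Finset.sum_const, Finset.card_range, hAi, nsmul_eq_mul]
    field_simp
    ring
  rw [← hLHS]
  exact hchain


lemma mainY {T : (Fin n → ℝ) → (Fin n → ℝ)} (hmono : Monotone T)
    (hcomm : ∀ (c : ℝ) (x : Fin n → ℝ), T (c • (1 : Fin n → ℝ) + x) = c • (1 : Fin n → ℝ) + T x)
    (hconc : ∀ i : Fin n, ConcaveOn ℝ Set.univ (fun x => T x i))
    {φ : ℕ → ℕ} (hφ : Filter.Tendsto φ Filter.atTop Filter.atTop) {ηa : Fin n → ℝ}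
    (hlim : Filter.Tendsto (fun r => ((φ r : ℝ))⁻¹ • T^[φ r] 0) Filter.atTop (nhds ηa)) :
    IsLUB {η : Fin n → ℝ |
      ∃ u : Fin n → ℝ, ∀ s : ℝ, 0 ≤ s → u + (s + 1) • η ≤ T (u + s • η)} ηa := by
  have hφn : Filter.Tendsto (fun r => (φ r : ℝ)) Filter.atTop Filter.atTop :=
    tendsto_natCast_atTop_atTop.comp hφ
  constructor
  · rintro η ⟨u, hd⟩
    intro i
    have hfi : Filter.Tendsto (fun r => (((φ r : ℝ))⁻¹ • T^[φ r] 0) i + 2 * ‖u‖ * ((φ r:ℝ))⁻¹)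
        Filter.atTop (nhds (ηa i)) := by
      have h1 : Filter.Tendsto (fun r => (((φ r : ℝ))⁻¹ • T^[φ r] 0) i) Filter.atTop
          (nhds (ηa i)) := ((continuous_apply i).continuousAt.tendsto.comp hlim)
      have h2 : Filter.Tendsto (fun r => 2 * ‖u‖ * ((φ r:ℝ))⁻¹) Filter.atTop (nhds 0) := by
        simpa using (hφn.inv_tendsto_atTop.const_mul (2 * ‖u‖))
      simpa using h1.add h2
    apply ge_of_tendsto hfi
    filter_upwards [hφn.eventually_ge_atTop 1] with r hr
    have hpos : (0:ℝ) < (φ r : ℝ) := by linarith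
    have hk := director_low_y hmono hcomm hd (φ r) i
    simp only [Pi.add_apply, Pi.smul_apply, Pi.one_apply, smul_eq_mul, mul_one] at hk ⊢
    have h3 := mul_le_mul_of_nonneg_left hk (inv_nonneg.mpr hpos.le)
    have h4 : (φ r:ℝ)⁻¹ * ((φ r:ℝ) * η i) = η i := by field_simp
    rw [h4] at h3
    have h5 : (φ r:ℝ)⁻¹ * (T^[φ r] 0 i + 2 * ‖u‖)
        = (φ r:ℝ)⁻¹ * T^[φ r] 0 i + 2 * ‖u‖ * (φ r:ℝ)⁻¹ := by ring
    rw [h5] at h3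
    exact h3
  · intro b hb
    intro i
    have hεlim : Filter.Tendsto (fun r => ηa i - ‖((φ r : ℝ))⁻¹ • T^[φ r] 0 - ηa‖)
        Filter.atTop (nhds (ηa i)) := by
      have h0 : Filter.Tendsto (fun r => ‖((φ r : ℝ))⁻¹ • T^[φ r] 0 - ηa‖) Filter.atTop
          (nhds 0) := tendsto_iff_norm_sub_tendsto_zero.mp hlim
      simpa using (h0.const_sub (ηa i))
    apply le_of_tendsto hεlim
    filter_upwards [hφ.eventually_ge_atTop 1] with r hr
    set m := φ r with hmr
    set ε : ℝ := ‖((m : ℝ))⁻¹ • T^[m] 0 - ηa‖ with hε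
    have hmem : (ηa - ε • (1 : Fin n → ℝ)) ∈ {η : Fin n → ℝ |
        ∃ u : Fin n → ℝ, ∀ s : ℝ, 0 ≤ s → u + (s + 1) • η ≤ T (u + s • η)} := by
      refine ⟨((m:ℝ)⁻¹ • ∑ k ∈ Finset.range m, T^[k] 0), ?_⟩
      apply eps_director hcomm
      · intro s hs
        exact avg_halfline hmono hcomm hconc hφ hlim hr hs
      · intro j
        have habs := norm_le_pi_norm (((m : ℝ))⁻¹ • T^[m] 0 - ηa) j
        simp only [Pi.sub_apply, Pi.smul_apply, Real.norm_eq_abs, smul_eq_mul] at habs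
        have := (abs_le.mp (habs.trans_eq rfl)).1
        simp only [Pi.sub_apply, Pi.smul_apply, Pi.one_apply, smul_eq_mul, mul_one]
        linarith
    have := hb hmem i
    simp only [Pi.sub_apply, Pi.smul_apply, Pi.one_apply, smul_eq_mul, mul_one] at this
    exact this


lemma key_w {T : (Fin n → ℝ) → (Fin n → ℝ)} (hmono : Monotone T)
    (hcomm : ∀ (c : ℝ) (x : Fin n → ℝ), T (c • (1 : Fin n → ℝ) + x) = c • (1 : Fin n → ℝ) + T x)
    (hconc : ∀ i : Fin n, ConcaveOn ℝ Set.univ (fun x => T x i))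
    {v : ℝ → Fin n → ℝ} {α : ℕ → ℝ} (hαm : ∀ r, α r ∈ Set.Ioo (0:ℝ) 1)
    (hα0 : Filter.Tendsto α Filter.atTop (nhds 0))
    (hfix : ∀ r, T ((1 - α r) • v (α r)) = v (α r))
    {ηa : Fin n → ℝ}
    (hwlim : Filter.Tendsto (fun r => α r • v (α r)) Filter.atTop (nhds ηa))
    {β : ℝ} (hβ : β ∈ Set.Ioo (0:ℝ) 1) {vβ : Fin n → ℝ} (hvβ : T ((1 - β) • vβ) = vβ)
    {s : ℝ} (hs : 0 ≤ s) :
    (1 - β) • vβ + s • ηa + β • vβ ≤ T ((1 - β) • vβ + s • ηa) := by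
  set lam : ℕ → ℝ := fun r => s * α r / (1 - α r) with hlam
  have hone : Filter.Tendsto (fun r => 1 - α r) Filter.atTop (nhds 1) := by
    simpa using (hα0.const_sub 1)
  have hlam0 : Filter.Tendsto lam Filter.atTop (nhds 0) := by
    have := ((hα0.const_mul s).div hone one_ne_zero)
    simpa [hlam, Pi.div_def] using this
  have hev : ∀ᶠ r in Filter.atTop, lam r ∈ Set.Icc (0:ℝ) 1 := by
    have h1 : ∀ᶠ r in Filter.atTop, lam r < 1 := hlam0.eventually_lt_const (by norm_num)
    filter_upwards [h1] with r hr1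
    refine ⟨?_, hr1.le⟩
    obtain ⟨ha0, ha1⟩ := hαm r
    have : (0:ℝ) < 1 - α r := by linarith
    positivity
  have hb : (1 - β) • vβ + s • ηa + β • vβ = vβ + s • ηa := by module
  rw [hb]
  have hp : Filter.Tendsto
      (fun r => lam r • ((1 - α r) • v (α r)) + (1 - lam r) • ((1 - β) • vβ))
      Filter.atTop (nhds ((1 - β) • vβ + s • ηa)) := by
    have h1 : Filter.Tendsto (fun r => lam r • ((1 - α r) • v (α r))) Filter.atTop
        (nhds (s • ηa)) := by
      have := hwlim.const_smul s
      apply this.congr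
      intro r
      obtain ⟨ha0, ha1⟩ := hαm r
      have hne : 1 - α r ≠ 0 := ne_of_gt (by linarith : (0:ℝ) < 1 - α r)
      rw [smul_smul, smul_smul, hlam]
      congr 1
      field_simp
    have h2 : Filter.Tendsto (fun r => (1 - lam r) • ((1 - β) • vβ)) Filter.atTop
        (nhds ((1 - β) • vβ)) := by
      have := (hlam0.const_sub 1).smul_const ((1 - β) • vβ)
      simpa using this
    have := h1.add h2
    rwa [add_comm (s • ηa)] at this
  have hq : Filter.Tendsto
      (fun r => lam r • T ((1 - α r) • v (α r)) + (1 - lam r) • T ((1 - β) • vβ))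
      Filter.atTop (nhds (vβ + s • ηa)) := by
    have h1 : Filter.Tendsto (fun r => lam r • T ((1 - α r) • v (α r))) Filter.atTop
        (nhds (s • ηa)) := by
      have hsc : Filter.Tendsto (fun r => s / (1 - α r)) Filter.atTop (nhds s) := by
        have := (tendsto_const_nhds (x := s)).div hone one_ne_zero
        simpa [Pi.div_def] using this
      have := hsc.smul hwlim
      apply this.congr
      intro r
      obtain ⟨ha0, ha1⟩ := hαm r
      have hne : 1 - α r ≠ 0 := ne_of_gt (by linarith : (0:ℝ) < 1 - α r)
      rw [hfix r, smul_smul, hlam]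
      congr 1
      field_simp
    have h2 : Filter.Tendsto (fun r => (1 - lam r) • T ((1 - β) • vβ)) Filter.atTop
        (nhds vβ) := by
      rw [hvβ]
      have := (hlam0.const_sub 1).smul_const vβ
      simpa using this
    have := h1.add h2
    rwa [add_comm (s • ηa)] at this
  exact conc_limit hmono hcomm hconc hev hp hq

lemma mainW {T : (Fin n → ℝ) → (Fin n → ℝ)} (hmono : Monotone T)
    (hcomm : ∀ (c : ℝ) (x : Fin n → ℝ), T (c • (1 : Fin n → ℝ) + x) = c • (1 : Fin n → ℝ) + T x)
    (hconc : ∀ i : Fin n, ConcaveOn ℝ Set.univ (fun x => T x i))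
    {v : ℝ → Fin n → ℝ} {α : ℕ → ℝ} (hαm : ∀ r, α r ∈ Set.Ioo (0:ℝ) 1)
    (hα0 : Filter.Tendsto α Filter.atTop (nhds 0))
    (hfix : ∀ r, T ((1 - α r) • v (α r)) = v (α r))
    {ηa : Fin n → ℝ}
    (hwlim : Filter.Tendsto (fun r => α r • v (α r)) Filter.atTop (nhds ηa)) :
    IsLUB {η : Fin n → ℝ |
      ∃ u : Fin n → ℝ, ∀ s : ℝ, 0 ≤ s → u + (s + 1) • η ≤ T (u + s • η)} ηa := by
  constructor
  · rintro η ⟨u, hd⟩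
    intro i
    have hlow : ∀ r, η i + α r * ((u + (-‖u‖ - ‖η‖) • (1 : Fin n → ℝ) - η) i)
        ≤ (α r • v (α r)) i := by
      intro r
      have := director_low_w hmono hcomm hd (hαm r) (hfix r) i
      simpa using this
    have h1 : Filter.Tendsto (fun r => η i + α r * ((u + (-‖u‖ - ‖η‖) • (1 : Fin n → ℝ) - η) i))
        Filter.atTop (nhds (η i)) := by
      have := (hα0.mul_const ((u + (-‖u‖ - ‖η‖) • (1 : Fin n → ℝ) - η) i)).const_add (η i)
      simpa using this
    have h2 : Filter.Tendsto (fun r => (α r • v (α r)) i) Filter.atTop (nhds (ηa i)) :=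
      ((continuous_apply i).continuousAt.tendsto.comp hwlim)
    exact le_of_tendsto_of_tendsto h1 h2 (Filter.Eventually.of_forall hlow)
  · intro b hb
    intro i
    have h0 : Filter.Tendsto (fun r => ‖α r • v (α r) - ηa‖) Filter.atTop (nhds 0) :=
      tendsto_iff_norm_sub_tendsto_zero.mp hwlim
    have hεlim : Filter.Tendsto (fun r => ηa i - ‖α r • v (α r) - ηa‖)
        Filter.atTop (nhds (ηa i)) := by
      simpa using (h0.const_sub (ηa i))
    apply le_of_tendsto hεlim
    apply Filter.Eventually.of_forall
    intro r
    set ε : ℝ := ‖α r • v (α r) - ηa‖ with hε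
    have hmem : (ηa - ε • (1 : Fin n → ℝ)) ∈ {η : Fin n → ℝ |
        ∃ u : Fin n → ℝ, ∀ s : ℝ, 0 ≤ s → u + (s + 1) • η ≤ T (u + s • η)} := by
      refine ⟨(1 - α r) • v (α r), ?_⟩
      apply eps_director hcomm
      · intro s hs
        exact key_w hmono hcomm hconc hαm hα0 hfix hwlim (hαm r) (hfix r) hs
      · intro j
        have habs := norm_le_pi_norm (α r • v (α r) - ηa) j
        simp only [Pi.sub_apply, Pi.smul_apply, Real.norm_eq_abs, smul_eq_mul] at habs
        have := (abs_le.mp habs).1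
        simp only [Pi.sub_apply, Pi.smul_apply, Pi.one_apply, smul_eq_mul, mul_one]
        linarith
    have := hb hmem i
    simp only [Pi.sub_apply, Pi.smul_apply, Pi.one_apply, smul_eq_mul, mul_one] at this
    exact this

end Stmt16

open Stmt16 in
/-- For a Bellman operator on ℝⁿ, the limits `lim_{α→0⁺} α v_α` and `lim_k k⁻¹ T^[k] 0`
exist and coincide with the supremum of the director vectors of sub-invariant half-lines. -/
theorem stmt_16 {n : ℕ} (T : (Fin n → ℝ) → (Fin n → ℝ))
    (hmono : Monotone T)
    (hcomm : ∀ (c : ℝ) (x : Fin n → ℝ),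
      T (c • (1 : Fin n → ℝ) + x) = c • (1 : Fin n → ℝ) + T x)
    (hconc : ∀ i : Fin n, ConcaveOn ℝ Set.univ (fun x => T x i))
    (v : ℝ → Fin n → ℝ)
    (hv : ∀ α ∈ Set.Ioo (0 : ℝ) 1, T ((1 - α) • v α) = v α) :
    ∃ ηbar : Fin n → ℝ,
      IsLUB {η : Fin n → ℝ |
          ∃ u : Fin n → ℝ, ∀ s : ℝ, 0 ≤ s → u + (s + 1) • η ≤ T (u + s • η)} ηbar ∧
      Filter.Tendsto (fun α : ℝ => α • v α)
        (nhdsWithin 0 (Set.Ioo (0 : ℝ) 1)) (nhds ηbar) ∧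
      Filter.Tendsto (fun k : ℕ => (k : ℝ)⁻¹ • T^[k] 0) Filter.atTop (nhds ηbar) := by
  classical
  have hball : ∀ k : ℕ, (k:ℝ)⁻¹ • T^[k] 0 ∈ Metric.closedBall (0 : Fin n → ℝ) ‖T 0‖ := by
    intro k
    rw [Metric.mem_closedBall, dist_zero_right]
    rcases Nat.eq_zero_or_pos k with hk | hk
    · subst hk; simpa using norm_nonneg (T 0)
    · have hkpos : (0:ℝ) < k := by exact_mod_cast hk
      rw [norm_smul, Real.norm_eq_abs, abs_of_nonneg (inv_nonneg.mpr hkpos.le)]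
      have hz := zbound hmono hcomm k
      calc (k:ℝ)⁻¹ * ‖T^[k] 0‖ ≤ (k:ℝ)⁻¹ * (k * ‖T 0‖) :=
            mul_le_mul_of_nonneg_left hz (inv_nonneg.mpr hkpos.le)
        _ = ‖T 0‖ := by field_simp
  obtain ⟨ηbar, -, φ, hφ, hφlim⟩ :=
    tendsto_subseq_of_bounded Metric.isBounded_closedBall hball
  have hφlim' : Filter.Tendsto (fun r => ((φ r : ℝ))⁻¹ • T^[φ r] 0) Filter.atTop (nhds ηbar) := hφlim
  have hlub := mainY hmono hcomm hconc hφ.tendsto_atTop hφlim'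
  refine ⟨ηbar, hlub, ?_, ?_⟩
  · apply Filter.tendsto_of_subseq_tendsto
    intro ns hns
    rw [tendsto_nhdsWithin_iff] at hns
    obtain ⟨hns0, hnsm⟩ := hns
    rw [Filter.eventually_atTop] at hnsm
    obtain ⟨N, hN⟩ := hnsm
    set α : ℕ → ℝ := fun j => ns (j + N) with hα
    have hαm : ∀ j, α j ∈ Set.Ioo (0:ℝ) 1 := fun j => hN _ (Nat.le_add_left N j)
    have hα0 : Filter.Tendsto α Filter.atTop (nhds 0) :=
      hns0.comp (Filter.tendsto_add_atTop_nat N)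
    have hbd : ∀ j, α j • v (α j) ∈ Metric.closedBall (0 : Fin n → ℝ) ‖T 0‖ := by
      intro j
      rw [Metric.mem_closedBall, dist_zero_right]
      exact wbound hmono hcomm (hαm j) (hv _ (hαm j))
    obtain ⟨a, -, ms, hms, hmslim⟩ :=
      tendsto_subseq_of_bounded Metric.isBounded_closedBall hbd
    have hαm2 : ∀ j, α (ms j) ∈ Set.Ioo (0:ℝ) 1 := fun j => hαm _
    have hα02 : Filter.Tendsto (fun j => α (ms j)) Filter.atTop (nhds 0) :=
      hα0.comp hms.tendsto_atTop
    have hfix2 : ∀ j, T ((1 - α (ms j)) • v (α (ms j))) = v (α (ms j)) :=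
      fun j => hv _ (hαm _)
    have hlima : Filter.Tendsto (fun j => α (ms j) • v (α (ms j))) Filter.atTop (nhds a) := hmslim
    have hlub2 := mainW hmono hcomm hconc hαm2 hα02 hfix2 hlima
    have heq : a = ηbar := hlub2.unique hlub
    refine ⟨fun j => ms j + N, ?_⟩
    have : Filter.Tendsto (fun j => ns (ms j + N) • v (ns (ms j + N))) Filter.atTop (nhds ηbar) := by
      rw [← heq]
      exact hlima
    exact this
  · apply Filter.tendsto_of_subseq_tendsto
    intro ns hns
    have hbd : ∀ j, (ns j : ℝ)⁻¹ • T^[ns j] 0 ∈ Metric.closedBall (0 : Fin n → ℝ) ‖T 0‖ :=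
      fun j => hball _
    obtain ⟨a, -, ms, hms, hmslim⟩ :=
      tendsto_subseq_of_bounded Metric.isBounded_closedBall hbd
    have hcomp : Filter.Tendsto (fun j => ns (ms j)) Filter.atTop Filter.atTop :=
      hns.comp hms.tendsto_atTop
    have hlima : Filter.Tendsto (fun r => ((ns (ms r) : ℝ))⁻¹ • T^[ns (ms r)] 0)
        Filter.atTop (nhds a) := hmslim
    have hlub2 := mainY hmono hcomm hconc hcomp hlima
    have heq : a = ηbar := hlub2.unique hlub
    exact ⟨ms, by rw [← heq]; exact hlima⟩
end

section
/- Let T : ℝ² → ℝ² be defined by T₁(x) = log(e^{x₁} + e^{x₂}) and T₂(x) = x₂. Then T is order preserving and sup-norm nonexpansive, T^k(0,0) = (log(k+1), 0) for all k ≥ 0, and T has no fixed point (since T₁(u) > u₁ for all u ∈ ℝ²); consequently T admits no invariant half-line s ↦ u + s·0 with director 0. -/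
/-- The map `T(x₁,x₂) = (log(e^{x₁}+e^{x₂}), x₂)` is order preserving and sup-norm
nonexpansive, satisfies `T^[k](0,0) = (log(k+1), 0)`, `T₁(u) > u₁` for all `u`, and has
no fixed point; hence it admits no invariant half-line with director `0`. -/
theorem stmt_18 (T : ℝ × ℝ → ℝ × ℝ)
    (hT : ∀ p : ℝ × ℝ, T p = (Real.log (Real.exp p.1 + Real.exp p.2), p.2)) :
    Monotone T ∧
    (∀ p q : ℝ × ℝ, ‖T p - T q‖ ≤ ‖p - q‖) ∧
    (∀ k : ℕ, T^[k] (0, 0) = (Real.log ((k : ℝ) + 1), 0)) ∧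
    (∀ u : ℝ × ℝ, u.1 < (T u).1) ∧
    ¬ ∃ u : ℝ × ℝ, ∀ s : ℝ, 0 ≤ s →
      T (u + s • (0 : ℝ × ℝ)) = u + (s + 1) • (0 : ℝ × ℝ) := by
  have hpos : ∀ a b : ℝ, 0 < Real.exp a + Real.exp b := fun a b =>
    add_pos (Real.exp_pos a) (Real.exp_pos b)
  have bound : ∀ a b c d m : ℝ, a - c ≤ m → b - d ≤ m →
      Real.log (Real.exp a + Real.exp b) - Real.log (Real.exp c + Real.exp d) ≤ m := by
    intro a b c d m h1 h2
    have hle : Real.exp a + Real.exp b ≤ Real.exp m * (Real.exp c + Real.exp d) := by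
      rw [mul_add, ← Real.exp_add, ← Real.exp_add]
      exact add_le_add (Real.exp_le_exp.2 (by linarith)) (Real.exp_le_exp.2 (by linarith))
    have := Real.log_le_log (hpos a b) hle
    rwa [Real.log_mul (Real.exp_ne_zero m) (ne_of_gt (hpos c d)), Real.log_exp,
      ← sub_le_iff_le_add] at this
  have hstrict : ∀ u : ℝ × ℝ, u.1 < (T u).1 := by
    intro u
    rw [hT u]
    have : Real.exp u.1 < Real.exp u.1 + Real.exp u.2 :=
      lt_add_of_pos_right _ (Real.exp_pos u.2)
    have := Real.log_lt_log (Real.exp_pos u.1) this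
    rwa [Real.log_exp] at this
  refine ⟨?_, ?_, ?_, hstrict, ?_⟩
  · intro p q hpq
    obtain ⟨h1, h2⟩ := Prod.le_def.1 hpq
    rw [hT p, hT q, Prod.le_def]
    refine ⟨Real.log_le_log (hpos p.1 p.2) ?_, h2⟩
    exact add_le_add (Real.exp_le_exp.2 h1) (Real.exp_le_exp.2 h2)
  · intro p q
    rw [hT p, hT q]
    have h1 : |p.1 - q.1| ≤ ‖p - q‖ := by
      rw [Prod.norm_def]
      exact le_max_of_le_left (by rw [Real.norm_eq_abs]; rfl)
    have h2 : |p.2 - q.2| ≤ ‖p - q‖ := by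
      rw [Prod.norm_def]
      exact le_max_of_le_right (by rw [Real.norm_eq_abs]; rfl)
    rw [abs_le] at h1 h2
    rw [Prod.norm_def]
    apply max_le
    · rw [Real.norm_eq_abs]
      show |Real.log (Real.exp p.1 + Real.exp p.2) -
        Real.log (Real.exp q.1 + Real.exp q.2)| ≤ _
      rw [abs_le]
      constructor
      · have := bound q.1 q.2 p.1 p.2 ‖p - q‖ (by linarith) (by linarith)
        linarith
      · exact bound p.1 p.2 q.1 q.2 ‖p - q‖ (by linarith) (by linarith)
    · rw [Real.norm_eq_abs]
      exact (abs_le.2 h2)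
  · intro k
    induction k with
    | zero => simp
    | succ n ih =>
      rw [Function.iterate_succ_apply', ih, hT]
      have h1 : (0:ℝ) < (n : ℝ) + 1 := by positivity
      simp only [Real.exp_log h1, Real.exp_zero]
      push_cast
      norm_num
  · rintro ⟨u, h⟩
    have h0 := h 0 le_rfl
    simp only [zero_smul, add_zero, zero_add, one_smul, smul_zero] at h0
    have := hstrict u
    rw [h0] at this
    exact lt_irrefl _ this
end
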